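/- arXiv:2009.12956 — 17 statements merged into one kernel-verified Lean document; each statement's English description precedes it below -/
import Mathlib

section
/- Let a ∈ ℝ with 0 < |a| < 2/(3√3). Then the cubic polynomial β_a(r) = 1 − r² + a·r³ has exactly three distinct real zeros, and every real zero r₀ of β_a is simple, i.e. β_a'(r₀) ≠ 0. -/
open Polynomial

private lemma cont_beta (a : ℝ) : Continuous fun r : ℝ => 1 - r ^ 2 + a * r ^ 3 := by
  continuity

private lemma three_roots_pos (a : ℝ) (ha : 0 < a) (ha2 : a ^ 2 < 4 / 27) :
    ∃ x y z : ℝ, x < y ∧ y < z ∧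
      (1 - x ^ 2 + a * x ^ 3 = 0) ∧ (1 - y ^ 2 + a * y ^ 3 = 0) ∧
      (1 - z ^ 2 + a * z ^ 3 = 0) := by
  set f : ℝ → ℝ := fun r => 1 - r ^ 2 + a * r ^ 3 with hf
  have hc : Continuous f := cont_beta a
  have ha' : a ≠ 0 := ne_of_gt ha
  have hcpos : (0:ℝ) < 2 / (3 * a) := by positivity
  have hfc : f (2 / (3 * a)) < 0 := by
    have : f (2 / (3 * a)) = (27 * a ^ 2 - 4) / (27 * a ^ 2) := by
      simp only [hf]; field_simp; ring
    rw [this]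
    apply div_neg_of_neg_of_pos <;> nlinarith
  have hneg2 : f (-2) < 0 := by simp only [hf]; nlinarith
  have hf0 : f 0 = 1 := by simp [hf]
  have hbig : 0 < f (2 / a) := by
    have : f (2 / a) = 1 + 4 / a ^ 2 := by simp only [hf]; field_simp; ring
    rw [this]; positivity
  have hlt : (2:ℝ) / (3 * a) < 2 / a := by
    rw [div_lt_div_iff₀ (by positivity) ha]; nlinarith
  -- root in (-2, 0)
  obtain ⟨x, hx, hfx⟩ : ∃ x ∈ Set.Ioo (-2:ℝ) 0, f x = 0 := by
    have := intermediate_value_Ioo (by norm_num : (-2:ℝ) ≤ 0) hc.continuousOn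
      (by rw [hf0]; exact ⟨hneg2, one_pos⟩ : (0:ℝ) ∈ Set.Ioo (f (-2)) (f 0))
    obtain ⟨x, hx, hfx⟩ := this; exact ⟨x, hx, hfx⟩
  obtain ⟨y, hy, hfy⟩ : ∃ y ∈ Set.Ioo (0:ℝ) (2 / (3 * a)), f y = 0 := by
    have := intermediate_value_Ioo' (le_of_lt hcpos) hc.continuousOn
      (by rw [hf0]; exact ⟨hfc, one_pos⟩ : (0:ℝ) ∈ Set.Ioo (f (2 / (3*a))) (f 0))
    obtain ⟨y, hy, hfy⟩ := this; exact ⟨y, hy, hfy⟩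
  obtain ⟨z, hz, hfz⟩ : ∃ z ∈ Set.Ioo (2 / (3 * a)) (2 / a), f z = 0 := by
    have := intermediate_value_Ioo (le_of_lt hlt) hc.continuousOn
      (⟨hfc, hbig⟩ : (0:ℝ) ∈ Set.Ioo (f (2 / (3*a))) (f (2 / a)))
    obtain ⟨z, hz, hfz⟩ := this; exact ⟨z, hz, hfz⟩
  exact ⟨x, y, z, lt_trans hx.2 hy.1, lt_trans hy.2 hz.1, hfx, hfy, hfz⟩

/-- For `a ∈ ℝ` with `0 < |a| < 2/(3√3)`, the cubic
`β_a(r) = 1 − r² + a·r³` has exactly three distinct real zeros, and every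
real zero of `β_a` is simple, i.e. the derivative of `β_a` does not vanish there. -/
theorem stmt_0 (a : ℝ) (h0 : 0 < |a|) (h1 : |a| < 2 / (3 * Real.sqrt 3)) :
    {r : ℝ | 1 - r ^ 2 + a * r ^ 3 = 0}.encard = 3 ∧
      ∀ r₀ : ℝ, 1 - r₀ ^ 2 + a * r₀ ^ 3 = 0 →
        deriv (fun r : ℝ => 1 - r ^ 2 + a * r ^ 3) r₀ ≠ 0 := by
  have ha : a ≠ 0 := by simpa using h0.ne'
  have hs3 : Real.sqrt 3 ^ 2 = 3 := Real.sq_sqrt (by norm_num)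
  have ha2 : a ^ 2 < 4 / 27 := by
    have h2 : |a| ^ 2 < (2 / (3 * Real.sqrt 3)) ^ 2 :=
      pow_lt_pow_left₀ h1 (abs_nonneg a) two_ne_zero
    have h3 : (2 / (3 * Real.sqrt 3)) ^ 2 = 4 / 27 := by
      rw [div_pow, mul_pow, hs3]; norm_num
    rw [sq_abs, h3] at h2; exact h2
  -- three distinct roots
  obtain ⟨x, y, z, hxy, hyz, hfx, hfy, hfz⟩ :
      ∃ x y z : ℝ, x < y ∧ y < z ∧
        (1 - x ^ 2 + a * x ^ 3 = 0) ∧ (1 - y ^ 2 + a * y ^ 3 = 0) ∧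
        (1 - z ^ 2 + a * z ^ 3 = 0) := by
    rcases lt_or_gt_of_ne ha with hneg | hpos
    · obtain ⟨x, y, z, hxy, hyz, hx, hy, hz⟩ :=
        three_roots_pos (-a) (by linarith) (by nlinarith)
      exact ⟨-z, -y, -x, by linarith, by linarith, by nlinarith, by nlinarith, by nlinarith⟩
    · exact three_roots_pos a hpos ha2
  constructor
  · -- cardinality
    set p : ℝ[X] := C a * X ^ 3 - X ^ 2 + C 1 with hp
    have hdeg : p.natDegree = 3 := by rw [hp]; compute_degree!
    have hpne : p ≠ 0 := fun h => by simp [h] at hdeg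
    have heval : ∀ r : ℝ, p.eval r = a * r ^ 3 - r ^ 2 + 1 := by
      intro r; simp [hp]
    have hset : {r : ℝ | 1 - r ^ 2 + a * r ^ 3 = 0} = ↑p.roots.toFinset := by
      ext r
      simp only [Set.mem_setOf_eq, Multiset.mem_toFinset, Finset.coe_sort_coe,
        mem_roots, hpne, ne_eq, not_false_eq_true, true_and, IsRoot.def, heval,
        Finset.mem_coe]
      constructor <;> intro h <;> linarith
    rw [hset, Set.encard_coe_eq_coe_finsetCard]
    have hle : p.roots.toFinset.card ≤ 3 := by
      calc p.roots.toFinset.card ≤ Multiset.card p.roots := Multiset.toFinset_card_le _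
        _ ≤ p.natDegree := Polynomial.card_roots' p
        _ = 3 := hdeg
    have hmem : ∀ r : ℝ, 1 - r ^ 2 + a * r ^ 3 = 0 → r ∈ p.roots.toFinset := by
      intro r hr
      simp only [Multiset.mem_toFinset, mem_roots, hpne, ne_eq, not_false_eq_true,
        true_and, IsRoot.def, heval]
      linarith
    have hsub : ({x, y, z} : Finset ℝ) ⊆ p.roots.toFinset := by
      intro r hr
      simp only [Finset.mem_insert, Finset.mem_singleton] at hr
      rcases hr with rfl | rfl | rfl
      · exact hmem _ hfx
      · exact hmem _ hfy
      · exact hmem _ hfz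
    have hcard3 : ({x, y, z} : Finset ℝ).card = 3 := by
      rw [Finset.card_insert_of_notMem (by simp; constructor <;> intro h <;> subst h <;> linarith),
        Finset.card_insert_of_notMem (by simp; intro h; subst h; linarith),
        Finset.card_singleton]
    have hge : 3 ≤ p.roots.toFinset.card := hcard3 ▸ Finset.card_le_card hsub
    have : p.roots.toFinset.card = 3 := le_antisymm hle hge
    rw [this]; rfl
  · -- simplicity
    intro r₀ hr₀ hderiv
    have h2 : HasDerivAt (fun r : ℝ => r ^ 2) (2 * r₀) r₀ := by
      simpa using hasDerivAt_pow 2 r₀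
    have h3 : HasDerivAt (fun r : ℝ => r ^ 3) (3 * r₀ ^ 2) r₀ := by
      simpa using hasDerivAt_pow 3 r₀
    have hD : HasDerivAt (fun r : ℝ => 1 - r ^ 2 + a * r ^ 3)
        (0 - 2 * r₀ + a * (3 * r₀ ^ 2)) r₀ :=
      ((hasDerivAt_const r₀ (1:ℝ)).sub h2).add (h3.const_mul a)
    rw [hD.deriv] at hderiv
    have hfac : r₀ * (3 * a * r₀ - 2) = 0 := by linarith [hderiv]; 
    rcases mul_eq_zero.mp hfac with h | h
    · subst h; simp at hr₀
    · have har : a * r₀ = 2 / 3 := by linarith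
      have hr2 : r₀ ^ 2 = 3 := by nlinarith
      nlinarith
end

section
/- Let a ∈ ℝ with |a| ≤ 2/(3√3). Then the set of positive zeros of β_a is nonempty and has a least element R. This smallest positive zero R satisfies a = (R² − 1)/R³ and √3/2 ≤ R ≤ √3; moreover R = √3 if and only if a = 2/(3√3), and R = √3/2 if and only if a = −2/(3√3). -/
private lemma key_low (s a r : ℝ) (hs2 : s^2 = 3) (hsp : 0 < s)
    (ha : -2 ≤ 3*s*a) (hr : 0 < r) (hrs : r < s/2) : 0 < 1 - r^2 + a*r^3 := by
  have hs3 : s^3 = 3*s := by nlinarith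
  have h1 : 0 < (s/2 - r) * (r+s)^2 := mul_pos (by linarith) (by positivity)
  have h2 : 0 ≤ (3*s*a + 2) * r^3 := mul_nonneg (by linarith) (by positivity)
  have key : 3*s*(1 - r^2 + a*r^3) = 2*((s/2 - r) * (r+s)^2) + (3*s*a + 2) * r^3 := by ring_nf; nlinarith
  nlinarith

/-- For `a ∈ ℝ` with `|a| ≤ 2/(3√3)`, the set of positive zeros of
`β_a(r) = 1 − r² + a·r³` is nonempty and has a least element `R`; this smallest positive
zero satisfies `a = (R² − 1)/R³`, `√3/2 ≤ R ≤ √3`, and moreover `R = √3 ↔ a = 2/(3√3)`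
and `R = √3/2 ↔ a = −2/(3√3)`. -/
theorem stmt_2 (a : ℝ) (h : |a| ≤ 2 / (3 * Real.sqrt 3)) :
    ∃ R : ℝ, IsLeast {r : ℝ | 0 < r ∧ 1 - r ^ 2 + a * r ^ 3 = 0} R ∧
      a = (R ^ 2 - 1) / R ^ 3 ∧
      Real.sqrt 3 / 2 ≤ R ∧ R ≤ Real.sqrt 3 ∧
      (R = Real.sqrt 3 ↔ a = 2 / (3 * Real.sqrt 3)) ∧
      (R = Real.sqrt 3 / 2 ↔ a = -(2 / (3 * Real.sqrt 3))) := by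
  set s := Real.sqrt 3 with hsdef
  have hs2 : s^2 = 3 := Real.sq_sqrt (by norm_num)
  have hsp : 0 < s := Real.sqrt_pos.mpr (by norm_num)
  have hs3 : s^3 = 3*s := by nlinarith
  obtain ⟨ha1, ha2⟩ := abs_le.mp h
  have haU : 3*s*a ≤ 2 := by
    have := (le_div_iff₀ (by positivity : (0:ℝ) < 3*s)).mp ha2
    linarith
  have haL : -2 ≤ 3*s*a := by
    have := (le_div_iff₀ (by positivity : (0:ℝ) < 3*s)).mp (neg_le.mp ha1)
    linarith
  -- f values at endpoints
  have hfhalf : 0 ≤ 1 - (s/2)^2 + a*(s/2)^3 := by nlinarith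
  have hfs : 1 - s^2 + a*s^3 ≤ 0 := by nlinarith
  -- IVT
  have hcont : ContinuousOn (fun r : ℝ => 1 - r^2 + a*r^3) (Set.Icc (s/2) s) := by fun_prop
  have hivt := intermediate_value_Icc' (by linarith : s/2 ≤ s) hcont
  obtain ⟨r₀, hr₀mem, hr₀⟩ := hivt (Set.mem_Icc.mpr ⟨hfs, hfhalf⟩)
  set T : Set ℝ := {r | s/2 ≤ r ∧ 1 - r^2 + a*r^3 = 0} with hT
  have hTne : T.Nonempty := ⟨r₀, hr₀mem.1, hr₀⟩
  have hTclosed : IsClosed T :=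
    IsClosed.inter isClosed_Ici (isClosed_eq (by fun_prop) continuous_const)
  have hTbdd : BddBelow T := ⟨s/2, fun r hr => hr.1⟩
  set R := sInf T with hR
  have hRT : R ∈ T := hTclosed.csInf_mem hTne hTbdd
  have hRpos : 0 < R := lt_of_lt_of_le (by positivity) hRT.1
  have hST : {r : ℝ | 0 < r ∧ 1 - r ^ 2 + a * r ^ 3 = 0} = T := by
    ext r
    simp only [Set.mem_setOf_eq, hT]
    constructor
    · rintro ⟨hr, hfr⟩
      refine ⟨?_, hfr⟩
      by_contra hlt
      push_neg at hlt
      have := key_low s a r hs2 hsp haL hr hlt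
      linarith
    · rintro ⟨hr, hfr⟩
      exact ⟨lt_of_lt_of_le (by positivity) hr, hfr⟩
  have hleast : IsLeast {r : ℝ | 0 < r ∧ 1 - r ^ 2 + a * r ^ 3 = 0} R := by
    rw [hST]
    exact ⟨hRT, fun r hr => csInf_le hTbdd hr⟩
  have hfR : 1 - R^2 + a*R^3 = 0 := hRT.2
  have hRle : R ≤ s := le_trans (csInf_le hTbdd ⟨hr₀mem.1, hr₀⟩) hr₀mem.2
  refine ⟨R, hleast, ?_, hRT.1, hRle, ?_, ?_⟩
  · field_simp
    linarith
  · constructor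
    · intro hRs
      rw [hRs] at hfR
      rw [eq_div_iff (by positivity)]
      linear_combination hfR + hs2 - a*hs3
    · intro haeq
      have h2 : 3*s*a = 2 := by
        rw [haeq]; field_simp
      have h5 : (R - s)^2 * (2*R + s) = 0 := by
        linear_combination 3*s*hfR + hs3 - R^3*h2
      have h6 : (R - s)^2 = 0 := by
        rcases mul_eq_zero.mp h5 with h | h
        · exact h
        · nlinarith
      have := pow_eq_zero_iff (n := 2) (by norm_num) |>.mp h6
      linarith [sub_eq_zero.mp this]
  · constructor
    · intro hRs
      rw [hRs] at hfR
      have h3 : 3*s*a = -2 := by linear_combination 8*hfR + 2*hs2 - a*hs3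
      have : a * (3*s) = -2 := by linarith
      field_simp at this ⊢
      linarith
    · intro haeq
      have h2 : 3*s*a = -2 := by
        rw [haeq]; field_simp
      have hhalf : s/2 ∈ T :=
        ⟨le_refl _, by linear_combination (1/8)*h2 - (1/4)*hs2 + (a/8)*hs3⟩
      have := csInf_le hTbdd hhalf
      linarith [hRT.1]
end

section
/- Let a ∈ ℝ and r ∈ ℝ be such that β = 1 − r² + a·r³ > 0 and D = 3 − 9·a·r + r² > 0. For x, y ∈ ℝ set x' = β^(−1/3)·x + (r·(2 − 3·a·r)·β^(−1/3)/(√3·√D))·y and y' = r·β^(−1/3)·x + ((3 − r²)·β^(−1/3)/(√3·√D))·y. Then for all x, y ∈ ℝ: x'³ − x'·y'² + a·y'³ = x³ − x·y² + ((27a − 18r + 27a·r² + (2 − 27a²)·r³)/(3√3·D^(3/2)))·y³. -/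
/-- Let `a, r ∈ ℝ` with `β = 1 − r² + a·r³ > 0` and
`D = 3 − 9·a·r + r² > 0`. For `x, y ∈ ℝ` set
`x' = β^(−1/3)·x + (r·(2 − 3·a·r)·β^(−1/3)/(√3·√D))·y` and
`y' = r·β^(−1/3)·x + ((3 − r²)·β^(−1/3)/(√3·√D))·y`. Then for all `x, y`:
`x'³ − x'·y'² + a·y'³ = x³ − x·y² + ((27a − 18r + 27a·r² + (2 − 27a²)·r³)/(3√3·D^(3/2)))·y³`. -/
theorem stmt_3 (a r : ℝ) (hβ : 0 < 1 - r ^ 2 + a * r ^ 3)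
    (hD : 0 < 3 - 9 * a * r + r ^ 2) :
    ∀ x y : ℝ,
      let β : ℝ := 1 - r ^ 2 + a * r ^ 3
      let D : ℝ := 3 - 9 * a * r + r ^ 2
      let x' : ℝ := β ^ (-(1 : ℝ) / 3) * x
        + (r * (2 - 3 * a * r) * β ^ (-(1 : ℝ) / 3) / (Real.sqrt 3 * Real.sqrt D)) * y
      let y' : ℝ := r * β ^ (-(1 : ℝ) / 3) * x
        + ((3 - r ^ 2) * β ^ (-(1 : ℝ) / 3) / (Real.sqrt 3 * Real.sqrt D)) * y
      x' ^ 3 - x' * y' ^ 2 + a * y' ^ 3 =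
        x ^ 3 - x * y ^ 2 +
          ((27 * a - 18 * r + 27 * a * r ^ 2 + (2 - 27 * a ^ 2) * r ^ 3) /
            (3 * Real.sqrt 3 * D ^ ((3 : ℝ) / 2))) * y ^ 3 := by
  intro x y β D x' y'
  set c : ℝ := β ^ (-(1 : ℝ) / 3) with hc_def
  set u : ℝ := Real.sqrt 3 with hu_def
  set t : ℝ := Real.sqrt D with ht_def
  have hβ' : (0:ℝ) < β := hβ
  have hD' : (0:ℝ) < D := hD
  have hu0 : u ≠ 0 := by
    rw [hu_def]; positivity
  have ht0 : t ≠ 0 := by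
    rw [ht_def]
    exact (Real.sqrt_pos.mpr hD').ne'
  have hc : c ^ 3 * β = 1 := by
    have h1 : c ^ 3 = β ^ ((-(1 : ℝ) / 3) * 3) := by
      rw [hc_def, ← Real.rpow_natCast (β ^ (-(1 : ℝ) / 3)) 3,
        ← Real.rpow_mul hβ'.le]
      norm_num
    rw [h1, show ((-(1:ℝ)/3) * 3) = -1 by norm_num, Real.rpow_neg_one]
    exact inv_mul_cancel₀ hβ'.ne'
  have hu : u ^ 2 = 3 := Real.sq_sqrt (by norm_num)
  have ht : t ^ 2 = D := Real.sq_sqrt hD'.le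
  have h3 : D ^ ((3 : ℝ) / 2) = t ^ 2 * t := by
    rw [ht]
    rw [ht_def, Real.sqrt_eq_rpow, show (3:ℝ)/2 = 1 + 1/2 by norm_num,
      Real.rpow_add hD', Real.rpow_one]
  rw [h3]
  show (c * x + (r * (2 - 3 * a * r) * c / (u * t)) * y) ^ 3
      - (c * x + (r * (2 - 3 * a * r) * c / (u * t)) * y)
        * (r * c * x + ((3 - r ^ 2) * c / (u * t)) * y) ^ 2
      + a * (r * c * x + ((3 - r ^ 2) * c / (u * t)) * y) ^ 3
    = x ^ 3 - x * y ^ 2 +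
        ((27 * a - 18 * r + 27 * a * r ^ 2 + (2 - 27 * a ^ 2) * r ^ 3) /
          (3 * u * (t ^ 2 * t))) * y ^ 3
  simp only [div_eq_mul_inv]
  set k : ℝ := (u * t)⁻¹ with hk_def
  have hk : k * (u * t) = 1 := inv_mul_cancel₀ (mul_ne_zero hu0 ht0)
  have e2 : (3 * u * (t ^ 2 * t))⁻¹ = k ^ 3 * u ^ 2 * (3 : ℝ)⁻¹ := by
    rw [hk_def]
    field_simp
  rw [e2]
  have hβeq : β = 1 - r ^ 2 + a * r ^ 3 := rfl
  have hDeq : D = 3 - 9 * a * r + r ^ 2 := rfl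
  rw [hβeq] at hc
  rw [hDeq] at ht
  linear_combination
    (-9*x*y^2*k^2 + 1*x^3 + -18*r*y^3*k^3 + -3*r^2*x*y^2*k^2 + 2*r^3*y^3*k^3
      + 27*a*y^3*k^3 + 27*a*r*x*y^2*k^2 + 27*a*r^2*y^3*k^3 + -27*a^2*r^3*y^3*k^3) * hc
    + (6*r*y^3*k^3 + (-2/3)*r^3*y^3*k^3 + -9*a*y^3*k^3 + -9*a*r^2*y^3*k^3
      + 9*a^2*r^3*y^3*k^3 + x*y^2*k^2*t^2) * hu
    + (3*x*y^2*k^2) * ht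
    + (-(x*y^2)*(k*u*t+1)) * hk
end

section
/- Let k ≥ 1, R ∈ (√3/2, √3), b ∈ ℝ with b ≠ 0, and set a = (R² − 1)/R³. Let q₁, …, q_k ∈ ℝ with q_i < 1/R for all i, and let γ₁, …, γ_k ∈ ℝ satisfy Σᵢ γᵢ² = 1 and Σᵢ γᵢ²/(1 − q_i·R) = (3 − R²)²/(3·b²·R⁴). Define β(r) = 1 − r² + a·r³ and N(r) = (3·b²·r⁴/(3 − r²)²)·Σᵢ γᵢ²/(1 − q_i·r). Then, as r tends to R with r < R, the quotient β(r)/(1 − N(r)) tends to (3 − R²)² / (9 + R² + (3·b²·R⁴/(3 − R²))·Σᵢ γᵢ²/(1 − q_i·R)²). -/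
/-- Let `k ≥ 1`, `R ∈ (√3/2, √3)`, `b ≠ 0`, `a = (R² − 1)/R³`.
Let `q₁, …, q_k < 1/R` and `γ₁, …, γ_k` satisfy `Σ γᵢ² = 1` and
`Σ γᵢ²/(1 − qᵢR) = (3 − R²)²/(3b²R⁴)`. With `β(r) = 1 − r² + a·r³` and
`N(r) = (3b²r⁴/(3 − r²)²)·Σ γᵢ²/(1 − qᵢr)`, as `r → R⁻` the quotient
`β(r)/(1 − N(r))` tends to
`(3 − R²)² / (9 + R² + (3b²R⁴/(3 − R²))·Σ γᵢ²/(1 − qᵢR)²)`. -/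
theorem stmt_5 (k : ℕ) (hk : 1 ≤ k) (R b : ℝ)
    (hR1 : Real.sqrt 3 / 2 < R) (hR2 : R < Real.sqrt 3) (hb : b ≠ 0)
    (q γ : Fin k → ℝ) (hq : ∀ i, q i < 1 / R)
    (hγ1 : ∑ i, (γ i) ^ 2 = 1)
    (hγ2 : ∑ i, (γ i) ^ 2 / (1 - q i * R) = (3 - R ^ 2) ^ 2 / (3 * b ^ 2 * R ^ 4)) :
    Filter.Tendsto
      (fun r : ℝ =>
        (1 - r ^ 2 + ((R ^ 2 - 1) / R ^ 3) * r ^ 3) /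
          (1 - (3 * b ^ 2 * r ^ 4 / (3 - r ^ 2) ^ 2) * ∑ i, (γ i) ^ 2 / (1 - q i * r)))
      (nhdsWithin R (Set.Iio R))
      (nhds ((3 - R ^ 2) ^ 2 /
        (9 + R ^ 2 + (3 * b ^ 2 * R ^ 4 / (3 - R ^ 2)) *
          ∑ i, (γ i) ^ 2 / (1 - q i * R) ^ 2))) := by
  have hR0 : 0 < R := lt_trans (by positivity) hR1
  have hR3 : R ^ 2 < 3 := by
    have := (Real.lt_sqrt hR0.le).mp hR2
    linarith
  have h3R : 0 < 3 - R ^ 2 := by linarith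
  have hd : ∀ i, 0 < 1 - q i * R := by
    intro i
    have : q i * R < 1 := (lt_div_iff₀ hR0).mp (hq i)
    linarith
  set S := ∑ i, (γ i) ^ 2 / (1 - q i * R) with hSdef
  set T := ∑ i, (γ i) ^ 2 * q i / (1 - q i * R) ^ 2 with hTdef
  set U := ∑ i, (γ i) ^ 2 / (1 - q i * R) ^ 2 with hUdef
  have hU : U = S + R * T := by
    rw [hUdef, hSdef, hTdef, Finset.mul_sum, ← Finset.sum_add_distrib]
    refine Finset.sum_congr rfl fun i _ => ?_
    have h := (hd i).ne'
    field_simp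
    ring
  -- derivative of the numerator
  have hβ : HasDerivAt (fun r : ℝ => 1 - r ^ 2 + (R ^ 2 - 1) / R ^ 3 * r ^ 3)
      ((R ^ 2 - 3) / R) R := by
    have h1 : HasDerivAt (fun r : ℝ => 1 - r ^ 2 + (R ^ 2 - 1) / R ^ 3 * r ^ 3)
        (-(↑2 * R ^ (2 - 1)) + (R ^ 2 - 1) / R ^ 3 * (↑3 * R ^ (3 - 1))) R :=
      ((hasDerivAt_pow 2 R).const_sub 1).add ((hasDerivAt_pow 3 R).const_mul _)
    convert h1 using 1
    have : (R:ℝ) ≠ 0 := hR0.ne'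
    field_simp
    ring
  -- derivative of the sum
  have hterm : ∀ i : Fin k, HasDerivAt (fun r : ℝ => γ i ^ 2 / (1 - q i * r))
      (γ i ^ 2 * q i / (1 - q i * R) ^ 2) R := by
    intro i
    have hin : HasDerivAt (fun r : ℝ => 1 - q i * r) (-(q i * 1)) R :=
      ((hasDerivAt_id R).const_mul (q i)).const_sub 1
    have h := (hasDerivAt_const R (γ i ^ 2)).fun_div hin (hd i).ne'
    exact h.congr_deriv (by ring)
  have hSd : HasDerivAt (fun r : ℝ => ∑ i, γ i ^ 2 / (1 - q i * r)) T R := by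
    have h := HasDerivAt.fun_sum (fun i (_ : i ∈ Finset.univ) => hterm i)
    simpa [hTdef] using h
  -- derivative of the prefactor
  have hnum : HasDerivAt (fun r : ℝ => 3 * b ^ 2 * r ^ 4) (3 * b ^ 2 * (↑4 * R ^ (4 - 1))) R :=
    (hasDerivAt_pow 4 R).const_mul _
  have hden0 : HasDerivAt (fun r : ℝ => 3 - r ^ 2) (-(↑2 * R ^ (2 - 1))) R :=
    (hasDerivAt_pow 2 R).const_sub 3
  have hden : HasDerivAt (fun r : ℝ => (3 - r ^ 2) ^ 2)
      (↑2 * (3 - R ^ 2) ^ (2 - 1) * -(↑2 * R ^ (2 - 1))) R := hden0.pow 2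
  have hfe := hnum.div hden (by positivity : ((3:ℝ) - R ^ 2) ^ 2 ≠ 0)
  have hg := (hfe.mul hSd).const_sub 1
  set g0 : ℝ := -((3 * b ^ 2 * (↑4 * R ^ (4 - 1)) * (3 - R ^ 2) ^ 2 -
      3 * b ^ 2 * R ^ 4 * (↑2 * (3 - R ^ 2) ^ (2 - 1) * -(↑2 * R ^ (2 - 1)))) /
      ((3 - R ^ 2) ^ 2) ^ 2 * S +
      3 * b ^ 2 * R ^ 4 / (3 - R ^ 2) ^ 2 * T) with hg0def
  set D := 9 + R ^ 2 + 3 * b ^ 2 * R ^ 4 / (3 - R ^ 2) * U with hDdef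
  have hU0 : 0 ≤ U := Finset.sum_nonneg fun i _ => by positivity
  have hD : 0 < D := by
    have h1 : 0 ≤ 3 * b ^ 2 * R ^ 4 / (3 - R ^ 2) * U := mul_nonneg (by positivity) hU0
    rw [hDdef]
    nlinarith [sq_nonneg R]
  have hRne : (R : ℝ) ≠ 0 := hR0.ne'
  have h3Rne : (3 : ℝ) - R ^ 2 ≠ 0 := h3R.ne'
  have hg0eq : g0 = -(D / (R * (3 - R ^ 2))) := by
    rw [hg0def, hDdef, hU, hγ2]
    field_simp
    ring
  have hgne : g0 ≠ 0 := by
    rw [hg0eq]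
    exact neg_ne_zero.mpr (div_pos hD (by positivity)).ne'
  have hβR : (1 : ℝ) - R ^ 2 + (R ^ 2 - 1) / R ^ 3 * R ^ 3 = 0 := by field_simp; ring
  have hgR : (1 : ℝ) - 3 * b ^ 2 * R ^ 4 / (3 - R ^ 2) ^ 2 * S = 0 := by
    rw [hγ2]
    field_simp
    ring
  have hβs := hasDerivAt_iff_tendsto_slope.mp hβ
  have hgs := hasDerivAt_iff_tendsto_slope.mp hg
  have key := (hβs.div hgs hgne).mono_left
    (nhdsWithin_mono R fun x (hx : x ∈ Set.Iio R) => ne_of_lt hx)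
  have hval : (R ^ 2 - 3) / R / g0 = (3 - R ^ 2) ^ 2 / D := by
    rw [hg0eq]
    field_simp
    ring
  rw [← hval]
  refine key.congr' ?_
  filter_upwards [self_mem_nhdsWithin] with r hr
  have hrR : r - R ≠ 0 := sub_ne_zero.mpr (ne_of_lt hr)
  simp only [Pi.div_apply, Pi.mul_apply, slope_def_field]
  rw [← hSdef, hβR, hgR, sub_zero, sub_zero, div_div_div_cancel_right₀ hrR]
end

section
/- Let R ∈ (√3/2, √3), b ∈ ℝ, and set q = (−3·b²·R⁴ + (3 − R²)²)/(R·(3 − R²)²). Then the function λ(r) = −3b²r⁴ + (1−q·r)(3−r²)² satisfies λ(R) = 0 and λ'(R) = −(3·b²·R⁴·(9 + R²) + (3 − R²)³)/(R·(3 − R²)) < 0; in particular λ has a simple zero at r = R. -/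
/-- Let `R ∈ (√3/2, √3)`, `b ∈ ℝ`, and
`q = (−3b²R⁴ + (3 − R²)²)/(R·(3 − R²)²)`. Then
`λ(r) = −3b²r⁴ + (1 − qr)(3 − r²)²` satisfies `λ(R) = 0` and
`λ'(R) = −(3b²R⁴(9 + R²) + (3 − R²)³)/(R(3 − R²)) < 0`; in particular `λ` has
a simple zero at `r = R`. -/
theorem stmt_6 (R b : ℝ) (h1 : Real.sqrt 3 / 2 < R) (h2 : R < Real.sqrt 3) :
    let q : ℝ := (-3 * b ^ 2 * R ^ 4 + (3 - R ^ 2) ^ 2) / (R * (3 - R ^ 2) ^ 2)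
    let lam : ℝ → ℝ := fun r => -3 * b ^ 2 * r ^ 4 + (1 - q * r) * (3 - r ^ 2) ^ 2
    lam R = 0 ∧
    deriv lam R = -(3 * b ^ 2 * R ^ 4 * (9 + R ^ 2) + (3 - R ^ 2) ^ 3) / (R * (3 - R ^ 2)) ∧
    deriv lam R < 0 := by
  intro q lam
  have hR0 : 0 < R := lt_trans (by positivity) h1
  have h3 : R ^ 2 < 3 := by
    have h := Real.sq_sqrt (by norm_num : (0:ℝ) ≤ 3)
    nlinarith [Real.sqrt_nonneg 3]
  have hpos : 0 < 3 - R ^ 2 := by linarith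
  have hRne : R ≠ 0 := ne_of_gt hR0
  have hne : 3 - R ^ 2 ≠ 0 := ne_of_gt hpos
  have hd : HasDerivAt lam
      ((-3 * b ^ 2) * (4 * R ^ 3) +
        (-(q * 1) * (3 - R ^ 2) ^ 2 +
          (1 - q * R) * (2 * (3 - R ^ 2) ^ 1 * (-(2 * R ^ 1))))) R := by
    have hA : HasDerivAt (fun r : ℝ => -3 * b ^ 2 * r ^ 4) ((-3 * b ^ 2) * (4 * R ^ 3)) R := by
      exact ((hasDerivAt_pow 4 R).const_mul (-3 * b ^ 2)).congr_deriv (by norm_num)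
    have h1q : HasDerivAt (fun r : ℝ => 1 - q * r) (-(q * 1)) R := by
      exact ((hasDerivAt_id R).const_mul q).const_sub 1
    have h3r : HasDerivAt (fun r : ℝ => (3 - r ^ 2) ^ 2)
        (2 * (3 - R ^ 2) ^ 1 * (-(2 * R ^ 1))) R := by
      exact (((hasDerivAt_pow 2 R).const_sub 3).pow 2).congr_deriv (by norm_num)
    exact hA.add (h1q.mul h3r)
  have heq : deriv lam R =
      -(3 * b ^ 2 * R ^ 4 * (9 + R ^ 2) + (3 - R ^ 2) ^ 3) / (R * (3 - R ^ 2)) := by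
    rw [hd.deriv]
    show (-3 * b ^ 2) * (4 * R ^ 3) +
        (-((-3 * b ^ 2 * R ^ 4 + (3 - R ^ 2) ^ 2) / (R * (3 - R ^ 2) ^ 2) * 1) * (3 - R ^ 2) ^ 2 +
          (1 - (-3 * b ^ 2 * R ^ 4 + (3 - R ^ 2) ^ 2) / (R * (3 - R ^ 2) ^ 2) * R) *
            (2 * (3 - R ^ 2) ^ 1 * (-(2 * R ^ 1)))) = _
    field_simp
    ring
  refine ⟨?_, heq, ?_⟩
  · show -3 * b ^ 2 * R ^ 4 +
      (1 - (-3 * b ^ 2 * R ^ 4 + (3 - R ^ 2) ^ 2) / (R * (3 - R ^ 2) ^ 2) * R) * (3 - R ^ 2) ^ 2 = 0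
    field_simp
    ring
  · rw [heq]
    have hA : 0 < 3 * b ^ 2 * R ^ 4 * (9 + R ^ 2) + (3 - R ^ 2) ^ 3 := by positivity
    exact div_neg_of_neg_of_pos (neg_lt_zero.mpr hA) (mul_pos hR0 hpos)
end

section
/- Let R ∈ (√3/2, √3), b > 0, a = (R² − 1)/R³, and q = (−3·b²·R⁴ + (3 − R²)²)/(R·(3 − R²)²). Define β(r) = 1 − r² + a·r³, λ(r) = −3b²r⁴ + (1−q·r)(3−r²)², χ(r) = −18·b·r·β(r), μ(r) = 3·(3 − 9·a·r + r²)·β(r). Then, as r tends to R with r < R, χ(r)/√(λ(r)·μ(r)) tends to L = −6√3·b·R²/√(3·b²·R⁴·(9 + R²) + (3 − R²)³), and −2 < L < 0. -/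
/-- Let `R ∈ (√3/2, √3)`, `b > 0`, `a = (R² − 1)/R³`, and
`q = (−3b²R⁴ + (3 − R²)²)/(R(3 − R²)²)`. With `β(r) = 1 − r² + ar³`,
`λ(r) = −3b²r⁴ + (1 − qr)(3 − r²)²`, `χ(r) = −18brβ(r)`,
`μ(r) = 3(3 − 9ar + r²)β(r)`, as `r → R⁻` the quotient `χ/√(λμ)` tends to
`L = −6√3·bR²/√(3b²R⁴(9 + R²) + (3 − R²)³)`, and `−2 < L < 0`. -/
theorem stmt_7 (R b : ℝ) (h1 : Real.sqrt 3 / 2 < R) (h2 : R < Real.sqrt 3) (hb : 0 < b) :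
    let a : ℝ := (R ^ 2 - 1) / R ^ 3
    let q : ℝ := (-3 * b ^ 2 * R ^ 4 + (3 - R ^ 2) ^ 2) / (R * (3 - R ^ 2) ^ 2)
    let β : ℝ → ℝ := fun r => 1 - r ^ 2 + a * r ^ 3
    let lam : ℝ → ℝ := fun r => -3 * b ^ 2 * r ^ 4 + (1 - q * r) * (3 - r ^ 2) ^ 2
    let χ : ℝ → ℝ := fun r => -18 * b * r * β r
    let μ : ℝ → ℝ := fun r => 3 * (3 - 9 * a * r + r ^ 2) * β r
    let L : ℝ := -6 * Real.sqrt 3 * b * R ^ 2 /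
      Real.sqrt (3 * b ^ 2 * R ^ 4 * (9 + R ^ 2) + (3 - R ^ 2) ^ 3)
    Filter.Tendsto (fun r => χ r / Real.sqrt (lam r * μ r))
      (nhdsWithin R (Set.Iio R)) (nhds L) ∧
    -2 < L ∧ L < 0 := by
  intro a q β lam χ μ L
  have hs3 : Real.sqrt 3 * Real.sqrt 3 = 3 := Real.mul_self_sqrt (by norm_num)
  have hs3pos : 0 < Real.sqrt 3 := Real.sqrt_pos.mpr (by norm_num)
  have hR0 : 0 < R := lt_trans (by positivity) h1
  have hRne : R ≠ 0 := ne_of_gt hR0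
  have h3R : 0 < 3 - R ^ 2 := by nlinarith [h2, hR0, hs3]
  have h3Rne : (3 : ℝ) - R ^ 2 ≠ 0 := ne_of_gt h3R
  have hD : 0 < 3 * b ^ 2 * R ^ 4 * (9 + R ^ 2) + (3 - R ^ 2) ^ 3 := by
    have t1 : 0 < 3 * b ^ 2 * R ^ 4 * (9 + R ^ 2) := by positivity
    have t2 : 0 < (3 - R ^ 2) ^ 3 := pow_pos h3R 3
    linarith
  have hsD : 0 < Real.sqrt (3 * b ^ 2 * R ^ 4 * (9 + R ^ 2) + (3 - R ^ 2) ^ 3) :=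
    Real.sqrt_pos.mpr hD
  have ha : a = (R ^ 2 - 1) / R ^ 3 := rfl
  have hq : q = (-3 * b ^ 2 * R ^ 4 + (3 - R ^ 2) ^ 2) / (R * (3 - R ^ 2) ^ 2) := rfl
  have hβdef : ∀ r, β r = 1 - r ^ 2 + a * r ^ 3 := fun _ => rfl
  have hlamdef : ∀ r, lam r = -3 * b ^ 2 * r ^ 4 + (1 - q * r) * (3 - r ^ 2) ^ 2 := fun _ => rfl
  have hχdef : ∀ r, χ r = -18 * b * r * β r := fun _ => rfl
  have hμdef : ∀ r, μ r = 3 * (3 - 9 * a * r + r ^ 2) * β r := fun _ => rfl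
  have hLdef : L = -6 * Real.sqrt 3 * b * R ^ 2 /
      Real.sqrt (3 * b ^ 2 * R ^ 4 * (9 + R ^ 2) + (3 - R ^ 2) ^ 3) := rfl
  clear_value a q β lam χ μ L
  have haR : a * R ^ 3 = R ^ 2 - 1 := by rw [ha]; field_simp
  have hqR : q * (R * (3 - R ^ 2) ^ 2) = -3 * b ^ 2 * R ^ 4 + (3 - R ^ 2) ^ 2 := by
    rw [hq]; field_simp
  -- the factor polynomials
  set P : ℝ → ℝ := fun r => a * r ^ 2 + (a * R - 1) * r + (a * R ^ 2 - R) with hP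
  set E : ℝ → ℝ := fun r => -q * r ^ 4 + (1 - 3 * b ^ 2 - q * R) * r ^ 3
      + (6 * q + (1 - 3 * b ^ 2) * R - q * R ^ 2) * r ^ 2
      + (-6 + 6 * q * R + (1 - 3 * b ^ 2) * R ^ 2 - q * R ^ 3) * r
      + (-9 * q - 6 * R + 6 * q * R ^ 2 + (1 - 3 * b ^ 2) * R ^ 3 - q * R ^ 4) with hE
  set M : ℝ → ℝ := fun r => 3 - 9 * a * r + r ^ 2 with hM
  have hβP : ∀ r, β r = (r - R) * P r := by
    intro r; rw [hβdef]; linear_combination haR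
  have hlamE : ∀ r, lam r = (r - R) * E r := by
    intro r; rw [hlamdef]; linear_combination -hqR
  have hμM : ∀ r, μ r = 3 * M r * β r := by
    intro r; rw [hμdef]
  have hprod : ∀ r, lam r * μ r = (r - R) ^ 2 * (3 * E r * M r * P r) := by
    intro r; rw [hlamE, hμM, hβP]; ring
  have hPR : P R = (R ^ 2 - 3) / R := by
    show a * R ^ 2 + (a * R - 1) * R + (a * R ^ 2 - R) = _
    rw [eq_div_iff hRne]; linear_combination 3 * haR
  have hMR : M R = (3 - R ^ 2) ^ 2 / R ^ 2 := by
    show 3 - 9 * a * R + R ^ 2 = _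
    rw [eq_div_iff (pow_ne_zero 2 hRne)]; linear_combination (-9 : ℝ) * haR
  have hER : E R = -(3 * b ^ 2 * R ^ 4 * (9 + R ^ 2) + (3 - R ^ 2) ^ 3) / (R * (3 - R ^ 2)) := by
    show -q * R ^ 4 + (1 - 3 * b ^ 2 - q * R) * R ^ 3
      + (6 * q + (1 - 3 * b ^ 2) * R - q * R ^ 2) * R ^ 2
      + (-6 + 6 * q * R + (1 - 3 * b ^ 2) * R ^ 2 - q * R ^ 3) * R
      + (-9 * q - 6 * R + 6 * q * R ^ 2 + (1 - 3 * b ^ 2) * R ^ 3 - q * R ^ 4) = _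
    rw [eq_div_iff (mul_ne_zero hRne h3Rne)]
    linear_combination (5 * R ^ 2 - 3) * hqR
  have hXval : 3 * E R * M R * P R
      = 3 * (3 * b ^ 2 * R ^ 4 * (9 + R ^ 2) + (3 - R ^ 2) ^ 3) * (3 - R ^ 2) ^ 2 / R ^ 4 := by
    rw [hER, hMR, hPR]; field_simp; ring
  have hXpos : 0 < 3 * E R * M R * P R := by
    rw [hXval]
    exact div_pos (mul_pos (mul_pos (by norm_num) hD) (pow_pos h3R 2)) (pow_pos hR0 4)
  -- the comparison function
  set G : ℝ → ℝ := fun r => 18 * b * r * P r / Real.sqrt (3 * E r * M r * P r) with hG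
  have hXcont : Continuous fun r => 3 * E r * M r * P r := by
    rw [hE, hP, hM]; fun_prop
  have hGR : G R = L := by
    show 18 * b * R * P R / Real.sqrt (3 * E R * M R * P R) = L
    rw [hXval, hPR, hLdef]
    rw [show 3 * (3 * b ^ 2 * R ^ 4 * (9 + R ^ 2) + (3 - R ^ 2) ^ 3) * (3 - R ^ 2) ^ 2 / R ^ 4
        = ((3 - R ^ 2) / R ^ 2) ^ 2 * (3 * (3 * b ^ 2 * R ^ 4 * (9 + R ^ 2) + (3 - R ^ 2) ^ 3))
        by field_simp]
    rw [Real.sqrt_mul (sq_nonneg _), Real.sqrt_sq (le_of_lt (div_pos h3R (pow_pos hR0 2))),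
      Real.sqrt_mul (by norm_num : (0:ℝ) ≤ 3)]
    rw [div_eq_div_iff
      (ne_of_gt (mul_pos (div_pos h3R (pow_pos hR0 2)) (mul_pos hs3pos hsD))) (ne_of_gt hsD)]
    field_simp
    linear_combination (18 - 6 * R ^ 2) * hs3
  have hGtend : Filter.Tendsto G (nhdsWithin R (Set.Iio R)) (nhds L) := by
    rw [← hGR]
    apply ContinuousAt.continuousWithinAt
    apply ContinuousAt.div
    · rw [hP]; fun_prop
    · exact (Real.continuous_sqrt.comp hXcont).continuousAt
    · exact ne_of_gt (Real.sqrt_pos.mpr hXpos)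
  have hXev : ∀ᶠ r in nhdsWithin R (Set.Iio R), 0 < 3 * E r * M r * P r := by
    apply Filter.Eventually.filter_mono nhdsWithin_le_nhds
    exact hXcont.continuousAt.tendsto.eventually (eventually_gt_nhds hXpos)
  have hlt : ∀ᶠ r in nhdsWithin R (Set.Iio R), r < R :=
    eventually_mem_nhdsWithin.mono (fun r hr => hr)
  have heq : ∀ᶠ r in nhdsWithin R (Set.Iio R),
      G r = χ r / Real.sqrt (lam r * μ r) := by
    filter_upwards [hXev, hlt] with r hXr hrR
    have hRr : 0 < R - r := sub_pos.mpr hrR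
    have hχ : χ r = (R - r) * (18 * b * r * P r) := by
      rw [hχdef, hβP]; ring
    rw [hχ, hprod r, show (r - R) ^ 2 * (3 * E r * M r * P r)
        = (R - r) ^ 2 * (3 * E r * M r * P r) by ring,
      Real.sqrt_mul (sq_nonneg _), Real.sqrt_sq (le_of_lt hRr),
      mul_div_mul_left _ _ (ne_of_gt hRr), hG]
  refine ⟨hGtend.congr' heq, ?_, ?_⟩
  · -- -2 < L
    rw [hLdef]
    rw [show -6 * Real.sqrt 3 * b * R ^ 2 = -(6 * Real.sqrt 3 * b * R ^ 2) by ring,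
      neg_div, neg_lt, neg_neg, div_lt_iff₀ hsD]
    have h4D : 6 * Real.sqrt 3 * b * R ^ 2
        < Real.sqrt ((2:ℝ) ^ 2 * (3 * b ^ 2 * R ^ 4 * (9 + R ^ 2) + (3 - R ^ 2) ^ 3)) := by
      apply (Real.lt_sqrt (by positivity)).mpr
      nlinarith [hs3, pow_pos h3R 3, mul_pos (pow_pos hb 2) (pow_pos hR0 6)]
    calc 6 * Real.sqrt 3 * b * R ^ 2
        < Real.sqrt ((2:ℝ) ^ 2 * (3 * b ^ 2 * R ^ 4 * (9 + R ^ 2) + (3 - R ^ 2) ^ 3)) := h4D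
      _ = 2 * Real.sqrt (3 * b ^ 2 * R ^ 4 * (9 + R ^ 2) + (3 - R ^ 2) ^ 3) := by
          rw [Real.sqrt_mul (by norm_num : (0:ℝ) ≤ (2:ℝ)^2),
            Real.sqrt_sq (by norm_num : (0:ℝ) ≤ 2)]
  · -- L < 0
    rw [hLdef]
    apply div_neg_of_neg_of_pos _ hsD
    have hpos : 0 < 6 * (Real.sqrt 3 * (b * R ^ 2)) := by
      have := mul_pos hs3pos (mul_pos hb (pow_pos hR0 2)); linarith
    have heq6 : -6 * Real.sqrt 3 * b * R ^ 2 = -(6 * (Real.sqrt 3 * (b * R ^ 2))) := by ring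
    rw [heq6]
    exact neg_lt_zero.mpr hpos
end

section
/- Let R ∈ (√3/2, √3), b ∈ ℝ, a = (R² − 1)/R³, and c = b·R²·(b²·R⁴ − (3 − R²)²)/(3 − R²)³. Define β(r) = 1 − r² + a·r³. Then the numerator −b³·r⁶ + b·r²·(3 − r²)² + c·(3 − r²)³ vanishes at r = R, and, as r tends to R with r < R, the quotient (−b³·r⁶ + b·r²·(3 − r²)² + c·(3 − r²)³)/β(r) tends to 6·b·R²·(3·b²·R⁴ − (3 − R²)²)/(3 − R²)². -/
/-- Let `R ∈ (√3/2, √3)`, `b ∈ ℝ`, `a = (R² − 1)/R³`, and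
`c = bR²(b²R⁴ − (3 − R²)²)/(3 − R²)³`. With `β(r) = 1 − r² + ar³`, the numerator
`−b³r⁶ + br²(3 − r²)² + c(3 − r²)³` vanishes at `r = R`, and as `r → R⁻` the
quotient `(−b³r⁶ + br²(3 − r²)² + c(3 − r²)³)/β(r)` tends to
`6bR²(3b²R⁴ − (3 − R²)²)/(3 − R²)²`. -/
theorem stmt_8 (R b : ℝ) (h1 : Real.sqrt 3 / 2 < R) (h2 : R < Real.sqrt 3) :
    let a : ℝ := (R ^ 2 - 1) / R ^ 3
    let c : ℝ := b * R ^ 2 * (b ^ 2 * R ^ 4 - (3 - R ^ 2) ^ 2) / (3 - R ^ 2) ^ 3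
    let num : ℝ → ℝ := fun r => -b ^ 3 * r ^ 6 + b * r ^ 2 * (3 - r ^ 2) ^ 2 + c * (3 - r ^ 2) ^ 3
    let β : ℝ → ℝ := fun r => 1 - r ^ 2 + a * r ^ 3
    num R = 0 ∧
    Filter.Tendsto (fun r => num r / β r) (nhdsWithin R (Set.Iio R))
      (nhds (6 * b * R ^ 2 * (3 * b ^ 2 * R ^ 4 - (3 - R ^ 2) ^ 2) / (3 - R ^ 2) ^ 2)) := by
  intro a c num β
  have hR0 : 0 < R := lt_trans (by positivity) h1
  have hRne : R ≠ 0 := ne_of_gt hR0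
  have hs3 : Real.sqrt 3 ^ 2 = 3 := Real.sq_sqrt (by norm_num)
  have hR3 : R ^ 2 < 3 := by nlinarith [Real.sqrt_nonneg 3]
  have hD : (3 - R ^ 2) ≠ 0 := by nlinarith
  have hnumR : num R = 0 := by
    show -b ^ 3 * R ^ 6 + b * R ^ 2 * (3 - R ^ 2) ^ 2 +
      (b * R ^ 2 * (b ^ 2 * R ^ 4 - (3 - R ^ 2) ^ 2) / (3 - R ^ 2) ^ 3) * (3 - R ^ 2) ^ 3 = 0
    field_simp
    ring
  refine ⟨hnumR, ?_⟩
  set P : ℝ → ℝ := fun r =>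
    (-b ^ 3 + b - c) * (r ^ 5 + r ^ 4 * R + r ^ 3 * R ^ 2 + r ^ 2 * R ^ 3 + r * R ^ 4 + R ^ 5)
    + (-6 * b + 9 * c) * (r ^ 3 + r ^ 2 * R + r * R ^ 2 + R ^ 3)
    + (9 * b - 27 * c) * (r + R) with hP
  set Q : ℝ → ℝ := fun r => a * (r ^ 2 + r * R + R ^ 2) - (r + R) with hQ
  have hβR : β R = 0 := by
    show 1 - R ^ 2 + (R ^ 2 - 1) / R ^ 3 * R ^ 3 = 0
    field_simp
    ring
  have hQR : Q R ≠ 0 := by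
    show a * (R ^ 2 + R * R + R ^ 2) - (R + R) ≠ 0
    show (R ^ 2 - 1) / R ^ 3 * (R ^ 2 + R * R + R ^ 2) - (R + R) ≠ 0
    rw [div_mul_eq_mul_div, div_sub' (by positivity), div_ne_zero_iff]
    constructor
    · nlinarith [mul_pos hR0 hR0]
    · positivity
  have heq : ∀ r ∈ Set.Iio R, num r / β r = P r / Q r := by
    intro r hr
    have hrR : r - R ≠ 0 := sub_ne_zero.mpr (ne_of_lt hr)
    have hnum : num r = (r - R) * P r := by
      have : num r - num R = (r - R) * P r := by
        show (-b ^ 3 * r ^ 6 + b * r ^ 2 * (3 - r ^ 2) ^ 2 + c * (3 - r ^ 2) ^ 3)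
          - (-b ^ 3 * R ^ 6 + b * R ^ 2 * (3 - R ^ 2) ^ 2 + c * (3 - R ^ 2) ^ 3) = (r - R) * P r
        rw [hP]; ring
      rw [hnumR, sub_zero] at this; exact this
    have hβ : β r = (r - R) * Q r := by
      have : β r - β R = (r - R) * Q r := by
        show (1 - r ^ 2 + a * r ^ 3) - (1 - R ^ 2 + a * R ^ 3) = (r - R) * Q r
        rw [hQ]; ring
      rw [hβR, sub_zero] at this; exact this
    rw [hnum, hβ, mul_div_mul_left _ _ hrR]
  have hcont : Filter.Tendsto (fun r => P r / Q r) (nhdsWithin R (Set.Iio R))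
      (nhds (P R / Q R)) := by
    apply Filter.Tendsto.mono_left _ nhdsWithin_le_nhds
    exact (ContinuousAt.div (by fun_prop) (by fun_prop) hQR).tendsto
  have hval : P R / Q R = 6 * b * R ^ 2 * (3 * b ^ 2 * R ^ 4 - (3 - R ^ 2) ^ 2) / (3 - R ^ 2) ^ 2 := by
    rw [hP, hQ]
    show ((-b ^ 3 + b - c) * (R ^ 5 + R ^ 4 * R + R ^ 3 * R ^ 2 + R ^ 2 * R ^ 3 + R * R ^ 4 + R ^ 5)
      + (-6 * b + 9 * c) * (R ^ 3 + R ^ 2 * R + R * R ^ 2 + R ^ 3)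
      + (9 * b - 27 * c) * (R + R)) / ((R ^ 2 - 1) / R ^ 3 * (R ^ 2 + R * R + R ^ 2) - (R + R)) = _
    show ((-b ^ 3 + (b : ℝ) - b * R ^ 2 * (b ^ 2 * R ^ 4 - (3 - R ^ 2) ^ 2) / (3 - R ^ 2) ^ 3) * (R ^ 5 + R ^ 4 * R + R ^ 3 * R ^ 2 + R ^ 2 * R ^ 3 + R * R ^ 4 + R ^ 5)
      + (-6 * b + 9 * (b * R ^ 2 * (b ^ 2 * R ^ 4 - (3 - R ^ 2) ^ 2) / (3 - R ^ 2) ^ 3)) * (R ^ 3 + R ^ 2 * R + R * R ^ 2 + R ^ 3)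
      + (9 * b - 27 * (b * R ^ 2 * (b ^ 2 * R ^ 4 - (3 - R ^ 2) ^ 2) / (3 - R ^ 2) ^ 3)) * (R + R)) / ((R ^ 2 - 1) / R ^ 3 * (R ^ 2 + R * R + R ^ 2) - (R + R)) = _
    rw [div_eq_div_iff ?_ (by positivity)]
    · field_simp
      ring
    · rw [div_mul_eq_mul_div, div_sub' (by positivity), div_ne_zero_iff]
      exact ⟨by nlinarith [mul_pos hR0 hR0], by positivity⟩
  rw [← hval]
  exact hcont.congr' (Filter.eventuallyEq_of_mem self_mem_nhdsWithin
    (fun r hr => (heq r hr).symm))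
end

section
/- Let R ∈ (√3/2, √3) and b > 0, and set a = (R² − 1)/R³, q = (−3·b²·R⁴ + (3 − R²)²)/(R·(3 − R²)²), and c = b·R²·(b²·R⁴ − (3 − R²)²)/(3 − R²)³. If c·v³ + q·v²·w + b·v·w² + a·w³ ≤ 2/(3√3) for all v, w ∈ ℝ with v² + w² = 1, then b ≤ (3 − R²)·√(12·R² − 9)/(3·R³). -/
/-- Let `R ∈ (√3/2, √3)`, `b > 0`, and set `a = (R² − 1)/R³`,
`q = (−3b²R⁴ + (3 − R²)²)/(R(3 − R²)²)`, `c = bR²(b²R⁴ − (3 − R²)²)/(3 − R²)³`.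
If `c·v³ + q·v²w + b·vw² + a·w³ ≤ 2/(3√3)` for all `(v, w)` on the unit circle,
then `b ≤ (3 − R²)·√(12R² − 9)/(3R³)`. -/
theorem stmt_9 (R b : ℝ) (h1 : Real.sqrt 3 / 2 < R) (h2 : R < Real.sqrt 3) (hb : 0 < b)
    (a q c : ℝ) (ha : a = (R ^ 2 - 1) / R ^ 3)
    (hq : q = (-3 * b ^ 2 * R ^ 4 + (3 - R ^ 2) ^ 2) / (R * (3 - R ^ 2) ^ 2))
    (hc : c = b * R ^ 2 * (b ^ 2 * R ^ 4 - (3 - R ^ 2) ^ 2) / (3 - R ^ 2) ^ 3)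
    (hmax : ∀ v w : ℝ, v ^ 2 + w ^ 2 = 1 →
      c * v ^ 3 + q * v ^ 2 * w + b * v * w ^ 2 + a * w ^ 3 ≤ 2 / (3 * Real.sqrt 3)) :
    b ≤ (3 - R ^ 2) * Real.sqrt (12 * R ^ 2 - 9) / (3 * R ^ 3) := by
  set S3 := Real.sqrt 3 with hS3def
  have hS3 : S3 ^ 2 = 3 := Real.sq_sqrt (by norm_num)
  have hS3pos : 0 < S3 := Real.sqrt_pos.2 (by norm_num)
  have hR : 0 < R := lt_trans (by positivity) h1
  have hR2lt : R ^ 2 < 3 := by nlinarith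
  have hR2gt : 3 / 4 < R ^ 2 := by nlinarith
  have hs : 0 < 3 - R ^ 2 := by linarith
  have hm : 0 < 4 * R ^ 2 - 3 := by linarith
  set u := Real.sqrt (4 * R ^ 2 - 3) with hudef
  have hu : u ^ 2 = 4 * R ^ 2 - 3 := Real.sq_sqrt hm.le
  have hupos : 0 < u := Real.sqrt_pos.2 hm
  have hcirc : (u / (2 * R)) ^ 2 + (-S3 / (2 * R)) ^ 2 = 1 := by
    field_simp
    linear_combination hu + hS3
  have key := hmax (u / (2 * R)) (-S3 / (2 * R)) hcirc
  have hpos : 0 < 24 * S3 * R ^ 6 * (3 - R ^ 2) ^ 3 := by positivity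
  -- P1 is 24·S3·R⁶·(3−R²)³ times the cubic evaluated at the witness point
  have key3 : 3 * S3 * b * R ^ 5 * (b ^ 2 * R ^ 4 - (3 - R ^ 2) ^ 2) * u ^ 3
      - 3 * S3 ^ 2 * R ^ 2 * (3 - R ^ 2) * ((3 - R ^ 2) ^ 2 - 3 * b ^ 2 * R ^ 4) * u ^ 2
      + 3 * S3 ^ 3 * b * R ^ 3 * (3 - R ^ 2) ^ 3 * u
      - 3 * S3 ^ 4 * (R ^ 2 - 1) * (3 - R ^ 2) ^ 3
      ≤ 16 * R ^ 6 * (3 - R ^ 2) ^ 3 := by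
    calc 3 * S3 * b * R ^ 5 * (b ^ 2 * R ^ 4 - (3 - R ^ 2) ^ 2) * u ^ 3
          - 3 * S3 ^ 2 * R ^ 2 * (3 - R ^ 2) * ((3 - R ^ 2) ^ 2 - 3 * b ^ 2 * R ^ 4) * u ^ 2
          + 3 * S3 ^ 3 * b * R ^ 3 * (3 - R ^ 2) ^ 3 * u
          - 3 * S3 ^ 4 * (R ^ 2 - 1) * (3 - R ^ 2) ^ 3
        = 24 * S3 * R ^ 6 * (3 - R ^ 2) ^ 3 *
          (c * (u / (2 * R)) ^ 3 + q * (u / (2 * R)) ^ 2 * (-S3 / (2 * R))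
            + b * (u / (2 * R)) * (-S3 / (2 * R)) ^ 2 + a * (-S3 / (2 * R)) ^ 3) := by
          rw [ha, hq, hc]
          field_simp
          ring
      _ ≤ 24 * S3 * R ^ 6 * (3 - R ^ 2) ^ 3 * (2 / (3 * S3)) :=
          mul_le_mul_of_nonneg_left key hpos.le
      _ = 16 * R ^ 6 * (3 - R ^ 2) ^ 3 := by
          field_simp
          ring
  have key2 : (S3 * b * u * R ^ 3 - (4 * R ^ 2 - 3) * (3 - R ^ 2)) *
      (S3 * b * u * R ^ 3 + (2 * R ^ 2 + 3) * (3 - R ^ 2)) ^ 2 ≤ 0 := by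
    have E3 : (S3 * b * u * R ^ 3 - (4 * R ^ 2 - 3) * (3 - R ^ 2)) *
        (S3 * b * u * R ^ 3 + (2 * R ^ 2 + 3) * (3 - R ^ 2)) ^ 2
        = 3 * S3 * b * R ^ 5 * (b ^ 2 * R ^ 4 - (3 - R ^ 2) ^ 2) * u ^ 3
          - 3 * S3 ^ 2 * R ^ 2 * (3 - R ^ 2) * ((3 - R ^ 2) ^ 2 - 3 * b ^ 2 * R ^ 4) * u ^ 2
          + 3 * S3 ^ 3 * b * R ^ 3 * (3 - R ^ 2) ^ 3 * u
          - 3 * S3 ^ 4 * (R ^ 2 - 1) * (3 - R ^ 2) ^ 3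
          - 16 * R ^ 6 * (3 - R ^ 2) ^ 3 := by
      linear_combination
        (81 * R ^ 2 * S3 ^ 2 - 81 * R ^ 4 * S3 ^ 2 + 27 * R ^ 5 * b * u * S3
          + 27 * R ^ 6 * S3 ^ 2 - 18 * R ^ 7 * b * u * S3 - 3 * R ^ 8 * S3 ^ 2
          + 3 * R ^ 9 * b * u * S3 - 3 * R ^ 9 * b ^ 3 * u * S3
          + R ^ 9 * b ^ 3 * u * S3 ^ 3) * hu +
        (-243 - 81 * S3 ^ 2 + 243 * R ^ 2 + 162 * R ^ 2 * S3 ^ 2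
          - 81 * R ^ 3 * b * u * S3 + 243 * R ^ 4 - 108 * R ^ 4 * S3 ^ 2
          + 81 * R ^ 5 * b * u * S3 - 315 * R ^ 6 + 30 * R ^ 6 * S3 ^ 2
          - 27 * R ^ 7 * b * u * S3 + 108 * R ^ 8 - 3 * R ^ 8 * S3 ^ 2
          + 3 * R ^ 9 * b * u * S3 - 3 * R ^ 9 * b ^ 3 * u * S3 - 12 * R ^ 10
          + 4 * R ^ 11 * b ^ 3 * u * S3) * hS3
    rw [E3]
    linarith
  have h4 : S3 * b * u * R ^ 3 ≤ (4 * R ^ 2 - 3) * (3 - R ^ 2) := by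
    have hf2 : 0 < S3 * b * u * R ^ 3 + (2 * R ^ 2 + 3) * (3 - R ^ 2) := by positivity
    have hB : 0 < (S3 * b * u * R ^ 3 + (2 * R ^ 2 + 3) * (3 - R ^ 2)) ^ 2 := pow_pos hf2 2
    have h4' := (mul_le_mul_iff_of_pos_right hB).mp (by linarith [key2] :
      (S3 * b * u * R ^ 3 - (4 * R ^ 2 - 3) * (3 - R ^ 2)) *
        (S3 * b * u * R ^ 3 + (2 * R ^ 2 + 3) * (3 - R ^ 2)) ^ 2
      ≤ 0 * (S3 * b * u * R ^ 3 + (2 * R ^ 2 + 3) * (3 - R ^ 2)) ^ 2)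
    linarith
  have hsq : Real.sqrt (12 * R ^ 2 - 9) = S3 * u := by
    rw [show (12 * R ^ 2 - 9 : ℝ) = 3 * (4 * R ^ 2 - 3) by ring,
      Real.sqrt_mul (by norm_num), hudef]
  rw [hsq, le_div_iff₀ (by positivity)]
  have h5 : S3 ^ 2 * u ^ 2 = 3 * (4 * R ^ 2 - 3) := by rw [hS3, hu]
  have h6 : b * (3 * R ^ 3) * (S3 * u) ≤ (3 - R ^ 2) * (S3 * u) * (S3 * u) := by
    calc b * (3 * R ^ 3) * (S3 * u) = 3 * (S3 * b * u * R ^ 3) := by ring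
      _ ≤ 3 * ((4 * R ^ 2 - 3) * (3 - R ^ 2)) := by linarith
      _ = (3 - R ^ 2) * (S3 * u) * (S3 * u) := by linear_combination (-(3 - R ^ 2)) * h5
  exact le_of_mul_le_mul_right h6 (by positivity)
end

section
/- Let R ∈ (√3/2, √3), b, c, q ∈ ℝ, a = (R² − 1)/R³, and suppose λ(R) = −3b²R⁴ + (1−q·R)(3−R²)² > 0. Define β(r) = 1 − r² + a·r³, λ(r) = −3b²r⁴ + (1−q·r)(3−r²)², χ(r) = −18·b·r·β(r), μ(r) = 3·(3 − 9·a·r + r²)·β(r), Θ₁(r) = (−b³r⁶ + b·r²(3−r²)² + c(3−r²)³)·√β(r), Θ₂(r) = (3b²r⁵(2−3ar) − r(2−3ar)(3−r²)² + q(3−r²)³)·√β(r), Θ₃(r) = 9b(3 + r² − 3ar³)·β(r)·√β(r), Θ₄(r) = ((2−27a²)r³ + 27ar² − 18r + 27a)·β(r)·√β(r). Then, as r tends to R with r < R: χ/√(λμ) tends to 0, Θ₁/λ^(3/2) tends to 0, Θ₂/(λ·√μ) tends to −1/√3, Θ₃/(μ·√λ) tends to 0, and Θ₄/μ^(3/2)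 tends to −2/(3√3). -/
open Filter Set

/-- Let `R ∈ (√3/2, √3)`, `a = (R² − 1)/R³`, and suppose
`λ(R) = −3b²R⁴ + (1 − qR)(3 − R²)² > 0`. With `β(r) = 1 − r² + ar³`,
`λ(r) = −3b²r⁴ + (1 − qr)(3 − r²)²`, `χ(r) = −18brβ(r)`, `μ(r) = 3(3 − 9ar + r²)β(r)`,
`Θ₁(r) = (−b³r⁶ + br²(3 − r²)² + c(3 − r²)³)√β(r)`,
`Θ₂(r) = (3b²r⁵(2 − 3ar) − r(2 − 3ar)(3 − r²)² + q(3 − r²)³)√β(r)`,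
`Θ₃(r) = 9b(3 + r² − 3ar³)β(r)√β(r)`,
`Θ₄(r) = ((2 − 27a²)r³ + 27ar² − 18r + 27a)β(r)√β(r)`, as `r → R⁻`:
`χ/√(λμ) → 0`, `Θ₁/λ^{3/2} → 0`, `Θ₂/(λ√μ) → −1/√3`, `Θ₃/(μ√λ) → 0`, and
`Θ₄/μ^{3/2} → −2/(3√3)`. -/
theorem stmt_10 (R b c q : ℝ) (h1 : Real.sqrt 3 / 2 < R) (h2 : R < Real.sqrt 3)
    (a : ℝ) (ha : a = (R ^ 2 - 1) / R ^ 3)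
    (hlamR : 0 < -3 * b ^ 2 * R ^ 4 + (1 - q * R) * (3 - R ^ 2) ^ 2) :
    let β : ℝ → ℝ := fun r => 1 - r ^ 2 + a * r ^ 3
    let lam : ℝ → ℝ := fun r => -3 * b ^ 2 * r ^ 4 + (1 - q * r) * (3 - r ^ 2) ^ 2
    let χ : ℝ → ℝ := fun r => -18 * b * r * β r
    let μ : ℝ → ℝ := fun r => 3 * (3 - 9 * a * r + r ^ 2) * β r
    let Θ₁ : ℝ → ℝ := fun r =>
      (-b ^ 3 * r ^ 6 + b * r ^ 2 * (3 - r ^ 2) ^ 2 + c * (3 - r ^ 2) ^ 3) * Real.sqrt (β r)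
    let Θ₂ : ℝ → ℝ := fun r =>
      (3 * b ^ 2 * r ^ 5 * (2 - 3 * a * r) - r * (2 - 3 * a * r) * (3 - r ^ 2) ^ 2
        + q * (3 - r ^ 2) ^ 3) * Real.sqrt (β r)
    let Θ₃ : ℝ → ℝ := fun r => 9 * b * (3 + r ^ 2 - 3 * a * r ^ 3) * β r * Real.sqrt (β r)
    let Θ₄ : ℝ → ℝ := fun r =>
      ((2 - 27 * a ^ 2) * r ^ 3 + 27 * a * r ^ 2 - 18 * r + 27 * a) * β r * Real.sqrt (β r)
    Filter.Tendsto (fun r => χ r / Real.sqrt (lam r * μ r))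
      (nhdsWithin R (Set.Iio R)) (nhds 0) ∧
    Filter.Tendsto (fun r => Θ₁ r / (lam r) ^ ((3 : ℝ) / 2))
      (nhdsWithin R (Set.Iio R)) (nhds 0) ∧
    Filter.Tendsto (fun r => Θ₂ r / (lam r * Real.sqrt (μ r)))
      (nhdsWithin R (Set.Iio R)) (nhds (-(1 / Real.sqrt 3))) ∧
    Filter.Tendsto (fun r => Θ₃ r / (μ r * Real.sqrt (lam r)))
      (nhdsWithin R (Set.Iio R)) (nhds 0) ∧
    Filter.Tendsto (fun r => Θ₄ r / (μ r) ^ ((3 : ℝ) / 2))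
      (nhdsWithin R (Set.Iio R)) (nhds (-(2 / (3 * Real.sqrt 3)))) := by
  intro β lam χ μ Θ₁ Θ₂ Θ₃ Θ₄
  have hR0 : 0 < R := lt_trans (by positivity) h1
  have hRne : R ≠ 0 := hR0.ne'
  have hR3 : R ^ 2 < 3 := by
    have := (Real.lt_sqrt hR0.le).mp h2
    linarith
  have h3R : 0 < 3 - R ^ 2 := by linarith
  set l := nhdsWithin R (Set.Iio R) with hl
  -- factorization of β
  have hβfac : ∀ r : ℝ, β r = (r - R) * (-(r + R) + a * (r ^ 2 + r * R + R ^ 2)) := by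
    intro r; simp only [β]; rw [ha]; field_simp; ring
  have hβR : β R = 0 := by rw [hβfac R]; ring
  have hφR : -(R + R) + a * (R ^ 2 + R * R + R ^ 2) < 0 := by
    have h : -(R + R) + a * (R ^ 2 + R * R + R ^ 2) = (R ^ 2 - 3) / R := by
      rw [ha]; field_simp; ring
    rw [h]
    exact div_neg_of_neg_of_pos (by linarith) hR0
  have hφT : Tendsto (fun r => -(r + R) + a * (r ^ 2 + r * R + R ^ 2)) l
      (nhds (-(R + R) + a * (R ^ 2 + R * R + R ^ 2))) :=
    ((by fun_prop : Continuous fun r : ℝ =>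
      -(r + R) + a * (r ^ 2 + r * R + R ^ 2)).tendsto R).mono_left nhdsWithin_le_nhds
  have hβpos : ∀ᶠ r in l, 0 < β r := by
    filter_upwards [hφT.eventually_lt_const hφR, eventually_mem_nhdsWithin] with r hneg hr
    rw [hβfac r]
    exact mul_pos_of_neg_of_neg (sub_neg.mpr hr) hneg
  -- the M function
  have hMcont : Continuous fun r : ℝ => 3 * (3 - 9 * a * r + r ^ 2) := by fun_prop
  have hMRval : 3 * (3 - 9 * a * R + R ^ 2) = 3 * (3 - R ^ 2) ^ 2 / R ^ 2 := by
    rw [ha]; field_simp; ring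
  have hMRpos : 0 < 3 * (3 - 9 * a * R + R ^ 2) := by rw [hMRval]; positivity
  have hMpos : ∀ᶠ r in l, 0 < 3 * (3 - 9 * a * r + r ^ 2) :=
    ((hMcont.tendsto R).mono_left nhdsWithin_le_nhds).eventually_const_lt hMRpos
  have hlamcont : Continuous lam := by simp only [lam]; fun_prop
  have hlamRpos : 0 < lam R := hlamR
  have hlampos : ∀ᶠ r in l, 0 < lam r :=
    ((hlamcont.tendsto R).mono_left nhdsWithin_le_nhds).eventually_const_lt hlamRpos
  have hsqrt3R : Real.sqrt (3 * (3 - 9 * a * R + R ^ 2)) = Real.sqrt 3 * (3 - R ^ 2) / R := by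
    rw [show 3 * (3 - 9 * a * R + R ^ 2) = (Real.sqrt 3 * (3 - R ^ 2) / R) ^ 2 by
      rw [div_pow, mul_pow, Real.sq_sqrt (by norm_num : (0:ℝ) ≤ 3), hMRval]]
    exact Real.sqrt_sq (by positivity)
  have hβcont : Continuous β := by simp only [β]; fun_prop
  have hsqrtβcont : Continuous fun r => Real.sqrt (β r) := Real.continuous_sqrt.comp hβcont
  have hμeq : ∀ r, μ r = 3 * (3 - 9 * a * r + r ^ 2) * β r := fun r => rfl
  have hrpow32 : ∀ x : ℝ, 0 ≤ x → x ^ ((3:ℝ)/2) = x * Real.sqrt x := by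
    intro x hx
    rw [show ((3:ℝ)/2) = (1:ℝ) + 1/2 by norm_num, Real.rpow_add' hx (by norm_num),
      Real.rpow_one, Real.sqrt_eq_rpow]
  have hsqrt3ne : Real.sqrt 3 ≠ 0 := by positivity
  refine ⟨?_, ?_, ?_, ?_, ?_⟩
  -- 1 : χ / √(λμ) → 0
  · have hnum : Tendsto (fun r => -18 * b * r * Real.sqrt (β r)) l
        (nhds (-18 * b * R * Real.sqrt (β R))) :=
      (((continuous_const.mul continuous_id).mul hsqrtβcont).tendsto R).mono_left
        nhdsWithin_le_nhds
    rw [hβR, Real.sqrt_zero, mul_zero] at hnum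
    have hden : Tendsto (fun r => Real.sqrt (lam r * (3 * (3 - 9 * a * r + r ^ 2)))) l
        (nhds (Real.sqrt (lam R * (3 * (3 - 9 * a * R + R ^ 2))))) :=
      ((Real.continuous_sqrt.comp (hlamcont.mul hMcont)).tendsto R).mono_left nhdsWithin_le_nhds
    have hdne : Real.sqrt (lam R * (3 * (3 - 9 * a * R + R ^ 2))) ≠ 0 :=
      (Real.sqrt_pos.mpr (mul_pos hlamRpos hMRpos)).ne'
    have hT := hnum.div hden hdne
    rw [zero_div] at hT
    refine hT.congr' ?_
    filter_upwards [hβpos, hMpos, hlampos] with r hβp hMp hLp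
    have hsne : Real.sqrt (β r) ≠ 0 := (Real.sqrt_pos.mpr hβp).ne'
    simp only [Pi.div_apply, χ, μ]
    rw [show lam r * (3 * (3 - 9 * a * r + r ^ 2) * β r)
        = lam r * (3 * (3 - 9 * a * r + r ^ 2)) * β r by ring,
      Real.sqrt_mul (show (0:ℝ) ≤ lam r * (3 * (3 - 9 * a * r + r ^ 2)) by positivity) (β r),
      show (-18) * b * r * β r
        = -18 * b * r * Real.sqrt (β r) * Real.sqrt (β r) by
          linear_combination (18 * b * r) * Real.mul_self_sqrt hβp.le,
      mul_div_mul_right _ _ hsne]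
  -- 2 : Θ₁ / λ^{3/2} → 0
  · have hcont : ContinuousAt (fun r => Θ₁ r / (lam r) ^ ((3:ℝ)/2)) R := by
      apply ContinuousAt.div
      · exact (Continuous.mul (by fun_prop) hsqrtβcont).continuousAt
      · exact (hlamcont.continuousAt).rpow_const (Or.inr (by norm_num))
      · exact (Real.rpow_pos_of_pos hlamRpos _).ne'
    have hT : Tendsto (fun r => Θ₁ r / (lam r) ^ ((3:ℝ)/2)) l
        (nhds (Θ₁ R / (lam R) ^ ((3:ℝ)/2))) :=
      hcont.tendsto.mono_left nhdsWithin_le_nhds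
    simpa [Θ₁, hβR] using hT
  -- 3 : Θ₂ / (λ√μ) → -1/√3
  · have hNR : (3 * b ^ 2 * R ^ 5 * (2 - 3 * a * R) - R * (2 - 3 * a * R) * (3 - R ^ 2) ^ 2
        + q * (3 - R ^ 2) ^ 3)
        = -((3 - R ^ 2) / R) * (-3 * b ^ 2 * R ^ 4 + (1 - q * R) * (3 - R ^ 2) ^ 2) := by
      rw [ha]; field_simp; ring
    have hnum : Tendsto (fun r => 3 * b ^ 2 * r ^ 5 * (2 - 3 * a * r)
        - r * (2 - 3 * a * r) * (3 - r ^ 2) ^ 2 + q * (3 - r ^ 2) ^ 3) l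
        (nhds (3 * b ^ 2 * R ^ 5 * (2 - 3 * a * R)
        - R * (2 - 3 * a * R) * (3 - R ^ 2) ^ 2 + q * (3 - R ^ 2) ^ 3)) :=
      ((by fun_prop : Continuous fun r : ℝ => 3 * b ^ 2 * r ^ 5 * (2 - 3 * a * r)
        - r * (2 - 3 * a * r) * (3 - r ^ 2) ^ 2 + q * (3 - r ^ 2) ^ 3).tendsto R).mono_left
        nhdsWithin_le_nhds
    have hden : Tendsto (fun r => lam r * Real.sqrt (3 * (3 - 9 * a * r + r ^ 2))) l
        (nhds (lam R * Real.sqrt (3 * (3 - 9 * a * R + R ^ 2)))) :=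
      ((hlamcont.mul (Real.continuous_sqrt.comp hMcont)).tendsto R).mono_left nhdsWithin_le_nhds
    have hdne : lam R * Real.sqrt (3 * (3 - 9 * a * R + R ^ 2)) ≠ 0 :=
      (mul_pos hlamRpos (Real.sqrt_pos.mpr hMRpos)).ne'
    have hval : (3 * b ^ 2 * R ^ 5 * (2 - 3 * a * R) - R * (2 - 3 * a * R) * (3 - R ^ 2) ^ 2
        + q * (3 - R ^ 2) ^ 3) / (lam R * Real.sqrt (3 * (3 - 9 * a * R + R ^ 2)))
        = -(1 / Real.sqrt 3) := by
      have key : ∀ L s t r : ℝ, L ≠ 0 → s ≠ 0 → t ≠ 0 → r ≠ 0 →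
          (-(t/r)*L)/(L*(s*t/r)) = -(1/s) := by
        intro L s t r hL hs ht hr; field_simp
      rw [hNR, hsqrt3R]
      exact key _ _ _ _ hlamRpos.ne' hsqrt3ne h3R.ne' hRne
    have hT := hnum.div hden hdne
    rw [hval] at hT
    refine hT.congr' ?_
    filter_upwards [hβpos, hMpos] with r hβp hMp
    have hsne : Real.sqrt (β r) ≠ 0 := (Real.sqrt_pos.mpr hβp).ne'
    simp only [Pi.div_apply, Θ₂, μ]
    rw [Real.sqrt_mul (by positivity : (0:ℝ) ≤ 3 * (3 - 9 * a * r + r ^ 2)), ← mul_assoc,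
      mul_div_mul_right _ _ hsne]
  -- 4 : Θ₃ / (μ√λ) → 0
  · have hnum : Tendsto (fun r => 9 * b * (3 + r ^ 2 - 3 * a * r ^ 3) * Real.sqrt (β r)) l
        (nhds 0) := by
      have h0 : Tendsto (fun r => 9 * b * (3 + r ^ 2 - 3 * a * r ^ 3) * Real.sqrt (β r)) l
          (nhds (9 * b * (3 + R ^ 2 - 3 * a * R ^ 3) * Real.sqrt (β R))) :=
        (((by fun_prop : Continuous fun r : ℝ =>
          9 * b * (3 + r ^ 2 - 3 * a * r ^ 3)).mul hsqrtβcont).tendsto R).mono_left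
          nhdsWithin_le_nhds
      simpa [hβR] using h0
    have hden : Tendsto (fun r => 3 * (3 - 9 * a * r + r ^ 2) * Real.sqrt (lam r)) l
        (nhds (3 * (3 - 9 * a * R + R ^ 2) * Real.sqrt (lam R))) :=
      ((hMcont.mul (Real.continuous_sqrt.comp hlamcont)).tendsto R).mono_left nhdsWithin_le_nhds
    have hdne : 3 * (3 - 9 * a * R + R ^ 2) * Real.sqrt (lam R) ≠ 0 :=
      (mul_pos hMRpos (Real.sqrt_pos.mpr hlamRpos)).ne'
    have hT := hnum.div hden hdne
    rw [zero_div] at hT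
    refine hT.congr' ?_
    filter_upwards [hβpos] with r hβp
    have hβne : β r ≠ 0 := hβp.ne'
    simp only [Pi.div_apply, Θ₃, μ]
    rw [show 9 * b * (3 + r ^ 2 - 3 * a * r ^ 3) * β r * Real.sqrt (β r)
        = 9 * b * (3 + r ^ 2 - 3 * a * r ^ 3) * Real.sqrt (β r) * β r by ring,
      show 3 * (3 - 9 * a * r + r ^ 2) * β r * Real.sqrt (lam r)
        = 3 * (3 - 9 * a * r + r ^ 2) * Real.sqrt (lam r) * β r by ring,
      mul_div_mul_right _ _ hβne]
  -- 5 : Θ₄ / μ^{3/2} → -2/(3√3)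
  · have hPR : ((2 - 27 * a ^ 2) * R ^ 3 + 27 * a * R ^ 2 - 18 * R + 27 * a)
        = -2 * (3 - R ^ 2) ^ 3 / R ^ 3 := by
      rw [ha]; field_simp; ring
    have hnum : Tendsto (fun r => (2 - 27 * a ^ 2) * r ^ 3 + 27 * a * r ^ 2 - 18 * r + 27 * a) l
        (nhds ((2 - 27 * a ^ 2) * R ^ 3 + 27 * a * R ^ 2 - 18 * R + 27 * a)) :=
      ((by fun_prop : Continuous fun r : ℝ =>
        (2 - 27 * a ^ 2) * r ^ 3 + 27 * a * r ^ 2 - 18 * r + 27 * a).tendsto R).mono_left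
        nhdsWithin_le_nhds
    have hden : Tendsto (fun r => 3 * (3 - 9 * a * r + r ^ 2)
        * Real.sqrt (3 * (3 - 9 * a * r + r ^ 2))) l
        (nhds (3 * (3 - 9 * a * R + R ^ 2) * Real.sqrt (3 * (3 - 9 * a * R + R ^ 2)))) :=
      ((hMcont.mul (Real.continuous_sqrt.comp hMcont)).tendsto R).mono_left nhdsWithin_le_nhds
    have hdne : 3 * (3 - 9 * a * R + R ^ 2) * Real.sqrt (3 * (3 - 9 * a * R + R ^ 2)) ≠ 0 :=
      (mul_pos hMRpos (Real.sqrt_pos.mpr hMRpos)).ne'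
    have hval : ((2 - 27 * a ^ 2) * R ^ 3 + 27 * a * R ^ 2 - 18 * R + 27 * a)
        / (3 * (3 - 9 * a * R + R ^ 2) * Real.sqrt (3 * (3 - 9 * a * R + R ^ 2)))
        = -(2 / (3 * Real.sqrt 3)) := by
      have key : ∀ s t r : ℝ, s ≠ 0 → t ≠ 0 → r ≠ 0 →
          (-2*t^3/r^3)/((3*t^2/r^2)*(s*t/r)) = -(2/(3*s)) := by
        intro s t r hs ht hr; field_simp
      rw [hPR, hsqrt3R, hMRval]
      exact key _ _ _ hsqrt3ne h3R.ne' hRne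
    have hT := hnum.div hden hdne
    rw [hval] at hT
    refine hT.congr' ?_
    filter_upwards [hβpos, hMpos] with r hβp hMp
    have hμpos : 0 < μ r := mul_pos hMp hβp
    have hβsne : β r * Real.sqrt (β r) ≠ 0 :=
      (mul_pos hβp (Real.sqrt_pos.mpr hβp)).ne'
    rw [Pi.div_apply, hrpow32 _ hμpos.le]
    simp only [Θ₄, μ]
    rw [Real.sqrt_mul (by positivity : (0:ℝ) ≤ 3 * (3 - 9 * a * r + r ^ 2)),
      show ((2 - 27 * a ^ 2) * r ^ 3 + 27 * a * r ^ 2 - 18 * r + 27 * a) * β r * Real.sqrt (β r)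
        = ((2 - 27 * a ^ 2) * r ^ 3 + 27 * a * r ^ 2 - 18 * r + 27 * a)
          * (β r * Real.sqrt (β r)) by ring,
      show 3 * (3 - 9 * a * r + r ^ 2) * β r
          * (Real.sqrt (3 * (3 - 9 * a * r + r ^ 2)) * Real.sqrt (β r))
        = 3 * (3 - 9 * a * r + r ^ 2) * Real.sqrt (3 * (3 - 9 * a * r + r ^ 2))
          * (β r * Real.sqrt (β r)) by ring,
      mul_div_mul_right _ _ hβsne]
end

section
/- For every t > 0 and all x, v, w ∈ ℝ the following identity holds: setting v' = (√t·v + w)/√(1+t) and w' = (−v + √t·w)/√(1+t), one has x³ − x·(v'² + w'²) + (2/(3√3))·((3−t)·√t/(1+t)^(3/2))·v'³ + (2/√3)·((−1+3t)/(1+t)^(3/2))·v'²·w' + (2/√3)·((−3+t)·√t/(1+t)^(3/2))·v'·w'² + (2/(3√3))·((1−3t)/(1+t)^(3/2))·w'³ = x³ − x·(v² + w²) − (2/(3√3))·v³ + (2/√3)·v·w². -/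
lemma stmt_11_aux (s u r x v w : ℝ) (hu : u ^ 2 = 1 + s ^ 2) (hu0 : u ≠ 0) (hr0 : r ≠ 0) :
    x ^ 3 - x * (((s*v+w)/u) ^ 2 + ((-v+s*w)/u) ^ 2)
        + (2 / (3 * r)) * ((3 - s^2) * s / u ^ 3) * ((s*v+w)/u) ^ 3
        + (2 / r) * ((-1 + 3 * s^2) / u ^ 3) * ((s*v+w)/u) ^ 2 * ((-v+s*w)/u)
        + (2 / r) * ((-3 + s^2) * s / u ^ 3) * ((s*v+w)/u) * ((-v+s*w)/u) ^ 2
        + (2 / (3 * r)) * ((1 - 3 * s^2) / u ^ 3) * ((-v+s*w)/u) ^ 3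
      = x ^ 3 - x * (v ^ 2 + w ^ 2) - (2 / (3 * r)) * v ^ 3
        + (2 / r) * v * w ^ 2 := by
  field_simp
  linear_combination (3 * x * r * u ^ 4 * (v^2 + w^2)
    + 2 * (v^3 - 3*v*w^2) * (u^4 + u^2*(1+s^2) + (1+s^2)^2)) * hu

/-- For every `t > 0` and all `x, v, w ∈ ℝ`, setting
`v' = (√t·v + w)/√(1+t)` and `w' = (−v + √t·w)/√(1+t)`, one has
`x³ − x(v'² + w'²) + (2/(3√3))((3−t)√t/(1+t)^{3/2})v'³
 + (2/√3)((−1+3t)/(1+t)^{3/2})v'²w' + (2/√3)((−3+t)√t/(1+t)^{3/2})v'w'²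
 + (2/(3√3))((1−3t)/(1+t)^{3/2})w'³
 = x³ − x(v² + w²) − (2/(3√3))v³ + (2/√3)vw²`. -/
theorem stmt_11 (t : ℝ) (ht : 0 < t) (x v w : ℝ) :
    let v' : ℝ := (Real.sqrt t * v + w) / Real.sqrt (1 + t)
    let w' : ℝ := (-v + Real.sqrt t * w) / Real.sqrt (1 + t)
    x ^ 3 - x * (v' ^ 2 + w' ^ 2)
        + (2 / (3 * Real.sqrt 3)) * ((3 - t) * Real.sqrt t / (1 + t) ^ ((3 : ℝ) / 2)) * v' ^ 3
        + (2 / Real.sqrt 3) * ((-1 + 3 * t) / (1 + t) ^ ((3 : ℝ) / 2)) * v' ^ 2 * w'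
        + (2 / Real.sqrt 3) * ((-3 + t) * Real.sqrt t / (1 + t) ^ ((3 : ℝ) / 2)) * v' * w' ^ 2
        + (2 / (3 * Real.sqrt 3)) * ((1 - 3 * t) / (1 + t) ^ ((3 : ℝ) / 2)) * w' ^ 3
      = x ^ 3 - x * (v ^ 2 + w ^ 2) - (2 / (3 * Real.sqrt 3)) * v ^ 3
        + (2 / Real.sqrt 3) * v * w ^ 2 := by
  intro v' w'
  have h1t : (0:ℝ) < 1 + t := by linarith
  have hu : Real.sqrt (1 + t) ^ 2 = 1 + Real.sqrt t ^ 2 := by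
    rw [Real.sq_sqrt h1t.le, Real.sq_sqrt ht.le]
  have hu0 : Real.sqrt (1 + t) ≠ 0 := by positivity
  have hr0 : Real.sqrt 3 ≠ 0 := by positivity
  have hrw : (1 + t) ^ ((3 : ℝ) / 2) = Real.sqrt (1 + t) ^ 3 := by
    have h : (1 + t) ^ ((3 : ℝ) / 2) = ((1 + t) ^ ((1:ℝ)/2)) ^ (3:ℕ) := by
      rw [← Real.rpow_natCast ((1 + t) ^ ((1:ℝ)/2)) 3, ← Real.rpow_mul h1t.le]
      norm_num
    rw [h, ← Real.sqrt_eq_rpow]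
  have key := stmt_11_aux (Real.sqrt t) (Real.sqrt (1 + t)) (Real.sqrt 3) x v w hu hu0 hr0
  rw [Real.sq_sqrt ht.le] at key
  rw [hrw]
  exact key
end

section
/- Let m, k ∈ ℕ and let F₁, …, F_m be real symmetric k×k matrices such that for every c ∈ ℝ^m with ‖c‖ = 1, every eigenvalue of Σᵢ cᵢ·Fᵢ lies in the interval [−1, 1]. Then for all s ∈ ℝ^m, u ∈ ℝ^k, w ∈ ℝ with ‖s‖² + ‖u‖² + w² = 1, one has Σᵢ sᵢ·⟨u, Fᵢ·u⟩ + ((2/√3)·‖s‖² − (1/√3)·‖u‖²)·w − (2/(3√3))·w³ ≤ 2/(3√3); moreover equality holds at (s, u, w) = (0, 0, −1), so the maximum of the left-hand side over the unit sphere equals 2/(3√3). -/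
open Matrix in
private theorem quad_bound' {k : ℕ} (M : Matrix (Fin k) (Fin k) ℝ) (hM : M.IsHermitian)
    (hbd : ∀ (t : ℝ) (v : Fin k → ℝ), v ≠ 0 → M.mulVec v = t • v → t ≤ 1)
    (u : Fin k → ℝ) :
    dotProduct u (M.mulVec u) ≤ ∑ j, (u j) ^ 2 := by
  classical
  set b := hM.eigenvectorBasis with hb
  set lam := hM.eigenvalues with hlam
  have hnz : ∀ j, (⇑(b j) : Fin k → ℝ) ≠ 0 := by
    intro j h
    exact hM.eigenvectorBasis.orthonormal.ne_zero j (by ext i; exact congrFun h i)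
  have hlam1 : ∀ j, lam j ≤ 1 := fun j =>
    hbd _ _ (hnz j) (hM.mulVec_eigenvectorBasis j)
  set u' : EuclideanSpace ℝ (Fin k) := (WithLp.equiv 2 _).symm u with hu'
  set c : Fin k → ℝ := fun j => (inner ℝ (b j) u' : ℝ) with hc
  have hic : ∀ j, (inner ℝ u' (b j) : ℝ) = c j := fun j => real_inner_comm _ _
  have hrep : ∑ j, c j • (b j) = u' := b.sum_repr' u'
  have hpars : ∑ j, c j * c j = ∑ j, (u j) ^ 2 := by
    have := b.sum_inner_mul_inner u' u'
    simp only [hic] at this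
    rw [this]
    rw [PiLp.inner_apply]
    simp [PiLp.inner_apply, u', sq]
  have hufun : u = ∑ j, c j • (⇑(b j) : Fin k → ℝ) := by
    funext i
    have h1 : ((∑ j, c j • b j : EuclideanSpace ℝ (Fin k)) : Fin k → ℝ) i = u' i := by
      rw [hrep]
    calc u i = u' i := rfl
      _ = ((∑ j, c j • b j : EuclideanSpace ℝ (Fin k)) : Fin k → ℝ) i := h1.symm
      _ = ∑ j, (c j • (⇑(b j) : Fin k → ℝ)) i := by
        rw [WithLp.ofLp_sum]; exact Finset.sum_apply i Finset.univ _
      _ = (∑ j, c j • (⇑(b j) : Fin k → ℝ)) i := (Finset.sum_apply i Finset.univ _).symm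
  have hdsum : ∀ (v : Fin k → ℝ) (f : Fin k → Fin k → ℝ),
      dotProduct v (∑ j, f j) = ∑ j, dotProduct v (f j) := by
    intro v f
    simp only [dotProduct, Finset.sum_apply, Finset.mul_sum]
    exact Finset.sum_comm
  have hMu : M.mulVec u = ∑ j, (c j * lam j) • (⇑(b j) : Fin k → ℝ) := by
    rw [hufun, ← Matrix.mulVecLin_apply, map_sum]
    refine Finset.sum_congr rfl fun j _ => ?_
    rw [_root_.map_smul, Matrix.mulVecLin_apply, hM.mulVec_eigenvectorBasis j, smul_smul]
  have hdot : dotProduct u (M.mulVec u) = ∑ j, lam j * (c j * c j) := by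
    rw [hMu, hdsum]
    refine Finset.sum_congr rfl fun j _ => ?_
    rw [dotProduct_smul]
    have h2 : dotProduct u ⇑(b j) = c j := by
      rw [← hic j]
      simp [PiLp.inner_apply, u', dotProduct]
      exact Finset.sum_congr rfl fun x _ => mul_comm _ _
    rw [h2]; simp; ring
  rw [hdot, ← hpars]
  apply Finset.sum_le_sum
  intro j _
  have h1 : 0 ≤ c j * c j := mul_self_nonneg _
  nlinarith [hlam1 j]

private theorem cubic_bound' (c a b2 w : ℝ) (hc : c ^ 2 = 3) (hcpos : 0 < c) (ha : 0 ≤ a)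
    (hb : 0 ≤ b2) (h : a ^ 2 + b2 + w ^ 2 = 1) :
    a * b2 + ((2 / c) * a ^ 2 - (1 / c) * b2) * w - (2 / (3 * c)) * w ^ 3 ≤ 2 / (3 * c) := by
  have hw1 : w ≤ 1 := by nlinarith [sq_nonneg a, sq_nonneg (w - 1)]
  have key : 2 - (3 * c * (a * b2) + (6 * a ^ 2 - 3 * b2) * w - 2 * w ^ 3)
      = (c * a - w - 1) ^ 2 * (c * a - w + 2) := by
    linear_combination (-(a ^ 3 * c) + 3 * a ^ 2 * w) * hc + (3 * w - 3 * c * a) * h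
  have hnn : 0 ≤ (c * a - w - 1) ^ 2 * (c * a - w + 2) :=
    mul_nonneg (sq_nonneg _) (by nlinarith [mul_nonneg hcpos.le ha])
  rw [le_div_iff₀ (by positivity : (0:ℝ) < 3 * c)]
  have hne : c ≠ 0 := ne_of_gt hcpos
  have hX : (a * b2 + ((2 / c) * a ^ 2 - (1 / c) * b2) * w - (2 / (3 * c)) * w ^ 3) * (3 * c)
      = 3 * c * (a * b2) + (6 * a ^ 2 - 3 * b2) * w - 2 * w ^ 3 := by
    field_simp
    ring
  rw [hX]
  linarith [key, hnn]

/-- Let `F₁, …, F_m` be real symmetric `k×k` matrices such that for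
every unit vector `c ∈ ℝ^m` all eigenvalues of `Σᵢ cᵢFᵢ` lie in `[−1, 1]`. Then for all
`(s, u, w)` with `‖s‖² + ‖u‖² + w² = 1`,
`Σᵢ sᵢ⟨u, Fᵢu⟩ + ((2/√3)‖s‖² − (1/√3)‖u‖²)w − (2/(3√3))w³ ≤ 2/(3√3)`;
equality holds at `(s, u, w) = (0, 0, −1)`, so the maximum over the unit sphere equals
`2/(3√3)`. -/
theorem stmt_12 (m k : ℕ) (F : Fin m → Matrix (Fin k) (Fin k) ℝ)
    (hsymm : ∀ i, (F i).IsSymm)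
    (heig : ∀ c : Fin m → ℝ, ∑ i, (c i) ^ 2 = 1 →
      ∀ (t : ℝ) (v : Fin k → ℝ), v ≠ 0 → (∑ i, c i • F i).mulVec v = t • v →
        t ∈ Set.Icc (-1 : ℝ) 1) :
    let P3 : (Fin m → ℝ) → (Fin k → ℝ) → ℝ → ℝ := fun s u w =>
      (∑ i, s i * dotProduct u ((F i).mulVec u))
        + ((2 / Real.sqrt 3) * (∑ i, (s i) ^ 2) - (1 / Real.sqrt 3) * (∑ j, (u j) ^ 2)) * w
        - (2 / (3 * Real.sqrt 3)) * w ^ 3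
    (∀ (s : Fin m → ℝ) (u : Fin k → ℝ) (w : ℝ),
        (∑ i, (s i) ^ 2) + (∑ j, (u j) ^ 2) + w ^ 2 = 1 →
        P3 s u w ≤ 2 / (3 * Real.sqrt 3)) ∧
    P3 0 0 (-1) = 2 / (3 * Real.sqrt 3) ∧
    IsGreatest
      {y : ℝ | ∃ (s : Fin m → ℝ) (u : Fin k → ℝ) (w : ℝ),
        (∑ i, (s i) ^ 2) + (∑ j, (u j) ^ 2) + w ^ 2 = 1 ∧ y = P3 s u w}
      (2 / (3 * Real.sqrt 3)) := by
  intro P3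
  have hc3 : (Real.sqrt 3) ^ 2 = 3 := Real.sq_sqrt (by norm_num)
  have hc3pos : 0 < Real.sqrt 3 := Real.sqrt_pos.mpr (by norm_num)
  -- the main bound
  have main : ∀ (s : Fin m → ℝ) (u : Fin k → ℝ) (w : ℝ),
      (∑ i, (s i) ^ 2) + (∑ j, (u j) ^ 2) + w ^ 2 = 1 →
      P3 s u w ≤ 2 / (3 * Real.sqrt 3) := by
    intro s u w hcon
    classical
    set S : ℝ := ∑ i, (s i) ^ 2 with hS
    set U : ℝ := ∑ j, (u j) ^ 2 with hU
    have hSnn : 0 ≤ S := Finset.sum_nonneg fun i _ => sq_nonneg _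
    have hUnn : 0 ≤ U := Finset.sum_nonneg fun j _ => sq_nonneg _
    set a : ℝ := Real.sqrt S with haA
    have ha2 : a ^ 2 = S := Real.sq_sqrt hSnn
    have hann : 0 ≤ a := Real.sqrt_nonneg _
    -- bound the cubic term
    have hT : (∑ i, s i * dotProduct u ((F i).mulVec u)) ≤ a * U := by
      by_cases hS0 : S = 0
      · have hsum0 : ∑ i, (s i) ^ 2 = 0 := by rw [← hS]; exact hS0
        have hs0 : ∀ i, s i = 0 := by
          intro i
          have h2 := (Finset.sum_eq_zero_iff_of_nonneg
            (fun j _ => sq_nonneg (s j))).1 hsum0 i (Finset.mem_univ i)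
          exact pow_eq_zero_iff (two_ne_zero) |>.1 h2
        have hz : (∑ i, s i * dotProduct u ((F i).mulVec u)) = 0 :=
          Finset.sum_eq_zero fun i _ => by rw [hs0 i]; ring
        rw [hz]
        exact mul_nonneg hann hUnn
      · have hApos : 0 < a := Real.sqrt_pos.mpr (lt_of_le_of_ne hSnn (Ne.symm hS0))
        set c : Fin m → ℝ := fun i => s i / a with hcdef
        have hcunit : ∑ i, (c i) ^ 2 = 1 := by
          have h1 : ∑ i, (c i) ^ 2 = (∑ i, (s i) ^ 2) / a ^ 2 := by
            rw [Finset.sum_div]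
            refine Finset.sum_congr rfl fun i _ => ?_
            simp [hcdef, div_pow]
          rw [h1, ← hS, ha2]
          exact div_self hS0
        set M : Matrix (Fin k) (Fin k) ℝ := ∑ i, c i • F i with hMdef
        have hMH : M.IsHermitian := by
          show M.conjTranspose = M
          rw [hMdef]
          rw [Matrix.conjTranspose_sum]
          refine Finset.sum_congr rfl fun i _ => ?_
          rw [Matrix.conjTranspose_smul, Matrix.conjTranspose_eq_transpose_of_trivial,
            hsymm i, star_trivial]
        have hbd : ∀ (t : ℝ) (v : Fin k → ℝ), v ≠ 0 → M.mulVec v = t • v → t ≤ 1 := by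
          intro t v hv hmv
          exact (heig c hcunit t v hv hmv).2
        have hquad := quad_bound' M hMH hbd u
        -- rewrite the quadratic form as a sum
        have hMvec : M.mulVec u = ∑ i, c i • ((F i).mulVec u) := by
          let φ : Matrix (Fin k) (Fin k) ℝ →+ (Fin k → ℝ) :=
            { toFun := fun A => A.mulVec u,
              map_zero' := Matrix.zero_mulVec u,
              map_add' := fun A B => Matrix.add_mulVec A B u }
          calc M.mulVec u = φ (∑ i, c i • F i) := by rw [hMdef]; rfl
            _ = ∑ i, φ (c i • F i) := map_sum φ _ _
            _ = ∑ i, c i • ((F i).mulVec u) :=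
                Finset.sum_congr rfl fun i _ => Matrix.smul_mulVec (c i) (F i) u
        have hdsum : dotProduct u (M.mulVec u)
            = ∑ i, c i * dotProduct u ((F i).mulVec u) := by
          rw [hMvec]
          simp only [dotProduct, Finset.sum_apply, Finset.mul_sum, Pi.smul_apply,
            smul_eq_mul]
          rw [Finset.sum_comm]
          exact Finset.sum_congr rfl fun i _ => Finset.sum_congr rfl fun j _ => by ring
        have hsc : ∀ i, s i = a * c i := by
          intro i
          rw [hcdef]
          field_simp
        calc (∑ i, s i * dotProduct u ((F i).mulVec u))
            = a * ∑ i, c i * dotProduct u ((F i).mulVec u) := by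
              rw [Finset.mul_sum]
              exact Finset.sum_congr rfl fun i _ => by rw [hsc i]; ring
          _ ≤ a * U := by
              apply mul_le_mul_of_nonneg_left _ hann
              rw [← hdsum]
              exact hquad
    -- conclude with the scalar cubic bound
    have hcon' : a ^ 2 + U + w ^ 2 = 1 := by rw [ha2]; exact hcon
    have hcb := cubic_bound' (Real.sqrt 3) a U w hc3 hc3pos hann hUnn hcon'
    have goalEq : P3 s u w = (∑ i, s i * dotProduct u ((F i).mulVec u))
        + ((2 / Real.sqrt 3) * S - (1 / Real.sqrt 3) * U) * w
        - (2 / (3 * Real.sqrt 3)) * w ^ 3 := rfl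
    rw [goalEq, ← ha2]
    linarith [hT, hcb]
  have heqv : P3 0 0 (-1) = 2 / (3 * Real.sqrt 3) := by
    show (∑ i, (0 : Fin m → ℝ) i * dotProduct 0 ((F i).mulVec 0))
        + ((2 / Real.sqrt 3) * (∑ i, ((0 : Fin m → ℝ) i) ^ 2)
          - (1 / Real.sqrt 3) * (∑ j, ((0 : Fin k → ℝ) j) ^ 2)) * (-1)
        - (2 / (3 * Real.sqrt 3)) * (-1) ^ 3 = 2 / (3 * Real.sqrt 3)
    norm_num
  refine ⟨main, heqv, ⟨⟨0, 0, -1, by simp, heqv.symm⟩, ?_⟩⟩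
  rintro y ⟨s, u, w, hcon, rfl⟩
  exact main s u w hcon
end

section
/- Let m, k ∈ ℕ and let F₁, …, F_m be real symmetric k×k matrices. Suppose there exist c ∈ ℝ^m with ‖c‖ = 1 and an eigenvalue t of Σᵢ cᵢ·Fᵢ with |t| > 1. Then there exist s ∈ ℝ^m, u ∈ ℝ^k, w ∈ ℝ with ‖s‖² + ‖u‖² + w² = 1 such that Σᵢ sᵢ·⟨u, Fᵢ·u⟩ + ((2/√3)·‖s‖² − (1/√3)·‖u‖²)·w − (2/(3√3))·w³ > 2/(3√3). -/
/-- Let `F₁, …, F_m` be real symmetric `k×k` matrices, and suppose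
there is a unit vector `c ∈ ℝ^m` and an eigenvalue `t` of `Σᵢ cᵢFᵢ` with `|t| > 1`.
Then there exist `(s, u, w)` with `‖s‖² + ‖u‖² + w² = 1` such that
`Σᵢ sᵢ⟨u, Fᵢu⟩ + ((2/√3)‖s‖² − (1/√3)‖u‖²)w − (2/(3√3))w³ > 2/(3√3)`. -/
theorem stmt_13 (m k : ℕ) (F : Fin m → Matrix (Fin k) (Fin k) ℝ)
    (hsymm : ∀ i, (F i).IsSymm)
    (c : Fin m → ℝ) (hc : ∑ i, (c i) ^ 2 = 1)
    (t : ℝ) (v : Fin k → ℝ) (hv : v ≠ 0)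
    (heig : (∑ i, c i • F i).mulVec v = t • v) (ht : 1 < |t|) :
    ∃ (s : Fin m → ℝ) (u : Fin k → ℝ) (w : ℝ),
      (∑ i, (s i) ^ 2) + (∑ j, (u j) ^ 2) + w ^ 2 = 1 ∧
      2 / (3 * Real.sqrt 3) <
        (∑ i, s i * dotProduct u ((F i).mulVec u))
          + ((2 / Real.sqrt 3) * (∑ i, (s i) ^ 2) - (1 / Real.sqrt 3) * (∑ j, (u j) ^ 2)) * w
          - (2 / (3 * Real.sqrt 3)) * w ^ 3 := by
  set S : ℝ := Real.sqrt 3 with hSdef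
  have hS3 : S ^ 2 = 3 := Real.sq_sqrt (by norm_num)
  have hSpos : 0 < S := Real.sqrt_pos.mpr (by norm_num)
  have habs : 0 < |t| := lt_trans one_pos ht
  have ht0 : t ≠ 0 := fun h => by simp [h] at habs
  set r : ℝ := ∑ j, v j ^ 2 with hrdef
  have hr0 : 0 ≤ r := Finset.sum_nonneg fun j _ => sq_nonneg _
  have hr : 0 < r := by
    rcases hr0.lt_or_eq with h | h
    · exact h
    · exfalso; apply hv; funext j
      have := (Finset.sum_eq_zero_iff_of_nonneg
        (fun j _ => sq_nonneg (v j))).mp h.symm j (Finset.mem_univ j)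
      exact pow_eq_zero_iff (by norm_num) |>.mp this
  set a : ℝ := t / (|t| * S) with hadef
  set b : ℝ := Real.sqrt (2 / (3 * r)) with hbdef
  have hts : |t| * |t| = t * t := abs_mul_abs_self t
  have ha2 : a ^ 2 = 1 / 3 := by
    rw [hadef, div_pow, mul_pow, hS3, sq_abs]
    rw [sq]
    field_simp
  have hb2 : b ^ 2 = 2 / (3 * r) := Real.sq_sqrt (by positivity)
  refine ⟨fun i => a * c i, fun j => b * v j, 0, ?_, ?_⟩
  · have h1 : ∑ i, (a * c i) ^ 2 = 1 / 3 := by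
      simp_rw [mul_pow, ← Finset.mul_sum, hc, mul_one, ha2]
    have h2 : ∑ j, (b * v j) ^ 2 = 2 / 3 := by
      simp_rw [mul_pow, ← Finset.mul_sum, ← hrdef, hb2]
      field_simp
    rw [h1, h2]; norm_num
  · have hvv : dotProduct v v = r := by
      simp [dotProduct, hrdef, sq]
    have hsum : ∑ i, c i * dotProduct v ((F i).mulVec v) = t * r := by
      have : dotProduct v ((∑ i, c i • F i).mulVec v) = t * r := by
        rw [heig, dotProduct_smul, hvv]; simp
      rw [← this,
        show (∑ i, c i • F i).mulVec v = ∑ i, (c i • F i).mulVec v from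
          map_sum (Matrix.mulVec.addMonoidHomLeft v) (fun i => c i • F i) Finset.univ]
      have hdotsum : ∀ (g : Fin m → Fin k → ℝ),
          dotProduct v (∑ i, g i) = ∑ i, dotProduct v (g i) := by
        intro g
        simp only [dotProduct, Finset.sum_apply, Finset.mul_sum]
        exact Finset.sum_comm
      rw [hdotsum]
      refine Finset.sum_congr rfl fun i _ => ?_
      rw [Matrix.smul_mulVec, dotProduct_smul]
      simp
    have hu : (fun j => b * v j) = b • v := by funext j; simp
    have key : (∑ i, (a * c i) * dotProduct (fun j => b * v j)
        ((F i).mulVec (fun j => b * v j))) = a * b ^ 2 * (t * r) := by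
      rw [hu]
      simp_rw [Matrix.mulVec_smul, dotProduct_smul, smul_dotProduct,
        smul_eq_mul]
      rw [← hsum, Finset.mul_sum]
      refine Finset.sum_congr rfl fun i _ => ?_
      ring
    rw [key]
    have hval : a * b ^ 2 * (t * r) = 2 * |t| / (3 * S) := by
      rw [hadef, hb2]
      field_simp
      linear_combination (-1) * hts
    rw [hval]
    have h2 : 2 / (3 * S) < 2 * |t| / (3 * S) := by
      rw [div_lt_div_iff₀ (by positivity) (by positivity)]
      nlinarith [hSpos]
    simpa using h2
end

section
/- For every F ∈ [−1, 1] and all s, u, w ∈ ℝ with s² + u² + w² = 1, one has F·s·u² + ((2/√3)·s² − (1/√3)·u²)·w − (2/(3√3))·w³ ≤ 2/(3√3); moreover equality is attained at (s, u, w) = (√3/2, 0, 1/2), so the maximum of the left-hand side over the unit sphere in ℝ³ equals 2/(3√3). -/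
private lemma key14 (r F s u w : ℝ) (hr : r ^ 2 = 3) (hr0 : 0 < r)
    (hF1 : -1 ≤ F) (hF2 : F ≤ 1) (h : s ^ 2 + u ^ 2 + w ^ 2 = 1) :
    r * F * s * u ^ 2 + (2 * s ^ 2 - u ^ 2) * w - 2 / 3 * w ^ 3 ≤ 2 / 3 := by
  set t := |s| with htdef
  have ht : t ^ 2 = s ^ 2 := sq_abs s
  have ht0 : (0:ℝ) ≤ t := abs_nonneg s
  have hFs : F * s ≤ t := by
    calc F * s ≤ |F * s| := le_abs_self _
    _ = |F| * |s| := abs_mul _ _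
    _ ≤ 1 * |s| := mul_le_mul_of_nonneg_right (abs_le.2 ⟨hF1, hF2⟩) (abs_nonneg s)
    _ = t := one_mul _
  have hw : w ≤ 1 := by nlinarith [sq_nonneg s, sq_nonneg u, sq_nonneg (w - 1)]
  have h' : t ^ 2 + u ^ 2 + w ^ 2 = 1 := by rw [ht]; exact h
  have hid : 2 - (3 * r * t * u ^ 2 + 3 * (2 * t ^ 2 - u ^ 2) * w - 2 * w ^ 3)
      = (w + 1 - r * t) ^ 2 * (2 - w + r * t) := by
    linear_combination (3 * w - 3 * r * t) * h' + (3 * t ^ 2 * w - r * t ^ 3) * hr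
  have e1 : 0 ≤ (w + 1 - r * t) ^ 2 * (2 - w + r * t) := by
    apply mul_nonneg (sq_nonneg _); nlinarith
  have e2 : 0 ≤ r * (t - F * s) * u ^ 2 :=
    mul_nonneg (mul_nonneg hr0.le (by linarith)) (sq_nonneg u)
  nlinarith [e1, e2, hid, ht]

/-- For every `F ∈ [−1, 1]` and all `(s, u, w)` on the unit sphere
in `ℝ³`, one has `F·s·u² + ((2/√3)s² − (1/√3)u²)w − (2/(3√3))w³ ≤ 2/(3√3)`;
equality is attained at `(s, u, w) = (√3/2, 0, 1/2)`, so the maximum over the unit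
sphere equals `2/(3√3)`. -/
theorem stmt_14 (F : ℝ) (hF : F ∈ Set.Icc (-1 : ℝ) 1) :
    (∀ s u w : ℝ, s ^ 2 + u ^ 2 + w ^ 2 = 1 →
      F * s * u ^ 2 + ((2 / Real.sqrt 3) * s ^ 2 - (1 / Real.sqrt 3) * u ^ 2) * w
        - (2 / (3 * Real.sqrt 3)) * w ^ 3 ≤ 2 / (3 * Real.sqrt 3)) ∧
    F * (Real.sqrt 3 / 2) * (0 : ℝ) ^ 2
        + ((2 / Real.sqrt 3) * (Real.sqrt 3 / 2) ^ 2 - (1 / Real.sqrt 3) * (0 : ℝ) ^ 2) * (1 / 2)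
        - (2 / (3 * Real.sqrt 3)) * (1 / 2 : ℝ) ^ 3 = 2 / (3 * Real.sqrt 3) ∧
    IsGreatest
      {y : ℝ | ∃ s u w : ℝ, s ^ 2 + u ^ 2 + w ^ 2 = 1 ∧
        y = F * s * u ^ 2 + ((2 / Real.sqrt 3) * s ^ 2 - (1 / Real.sqrt 3) * u ^ 2) * w
          - (2 / (3 * Real.sqrt 3)) * w ^ 3}
      (2 / (3 * Real.sqrt 3)) := by
  obtain ⟨hF1, hF2⟩ := hF
  set r := Real.sqrt 3 with hrdef
  have hr : r ^ 2 = 3 := Real.sq_sqrt (by norm_num)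
  have hr0 : 0 < r := Real.sqrt_pos.2 (by norm_num)
  have hub : ∀ s u w : ℝ, s ^ 2 + u ^ 2 + w ^ 2 = 1 →
      F * s * u ^ 2 + ((2 / r) * s ^ 2 - (1 / r) * u ^ 2) * w
        - (2 / (3 * r)) * w ^ 3 ≤ 2 / (3 * r) := by
    intro s u w h
    have key := key14 r F s u w hr hr0 hF1 hF2 h
    have hrne : r ≠ 0 := hr0.ne'
    have hrw : F * s * u ^ 2 + ((2 / r) * s ^ 2 - (1 / r) * u ^ 2) * w
        - (2 / (3 * r)) * w ^ 3
        = (r * F * s * u ^ 2 + (2 * s ^ 2 - u ^ 2) * w - 2 / 3 * w ^ 3) / r := by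
      field_simp
    rw [hrw, show (2:ℝ) / (3 * r) = (2 / 3) / r by ring]
    gcongr
  have heq : F * (r / 2) * (0 : ℝ) ^ 2
      + ((2 / r) * (r / 2) ^ 2 - (1 / r) * (0 : ℝ) ^ 2) * (1 / 2)
      - (2 / (3 * r)) * (1 / 2 : ℝ) ^ 3 = 2 / (3 * r) := by
    have hrne : r ≠ 0 := hr0.ne'
    field_simp
    nlinarith [hr]
  refine ⟨hub, heq, ⟨⟨r / 2, 0, 1 / 2, by nlinarith [hr], heq.symm⟩, ?_⟩⟩
  rintro y ⟨s, u, w, h, rfl⟩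
  exact hub s u w h
end

section
/- Let m ≥ 1, k ≥ 1, let γ ∈ ℝ^k with ‖γ‖ = 1, and let b ∈ ℝ with |b| < √10/12. Then for all s ∈ ℝ^m, u ∈ ℝ^k, w ∈ ℝ with ‖s‖² + ‖u‖² + w² = 1, one has −2·b·‖s‖²·⟨γ, u⟩ + (1/√2)·‖s‖²·w + b·⟨γ, u⟩·w² + (1/(2√2))·w³ ≤ 2/(3√3); moreover equality is attained at every point (s, 0, √2/√3) with ‖s‖² = 1/3, so the maximum of the left-hand side over the unit sphere equals 2/(3√3). -/
set_option maxHeartbeats 1000000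

private lemma keyPoly (U z : ℝ) (hU : 0 ≤ U) (h' : 0 ≤ 3 - 3*U - 2*z^2) :
    120*U*(z^2 - 1 + U)^2 ≤ 16*((z-1)^2*(z+2) + 3*U*z)^2 := by
  have hQ : 0 ≤ 16*(z-1)^4*(z+2)^2 - 24*U*(z-1)^2*(z^2+2*z+5)
      + 48*U^2*(5-2*z^2) - 120*U^3 := by
    rcases le_total 0 z with hz | hz
    · have hQ1 : 0 ≤ 16*(z-1)^4*(z+2)^2 - 24*U*(z-1)^2*(z^2+2*z+5) + 96*U^2 := by
        have g : 0 ≤ 32*(z+2)^2 - 3*(z^2+2*z+5)^2 := by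
          nlinarith [sq_nonneg z, sq_nonneg (z-1), sq_nonneg (z+1), mul_nonneg hz hz,
            mul_nonneg (mul_nonneg hz hz) hz]
        nlinarith [sq_nonneg (192*U - 24*(z-1)^2*(z^2+2*z+5)), mul_nonneg (sq_nonneg ((z-1)^2)) g]
      nlinarith [mul_nonneg (mul_nonneg hU hU) h', mul_nonneg (mul_nonneg hU hU) hU]
    · have hz2 : 0 ≤ 2 + z := by nlinarith [sq_nonneg z]
      nlinarith [mul_nonneg hU h', mul_nonneg (mul_nonneg hU hU) h',
        mul_nonneg (mul_nonneg hU h') h',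
        mul_nonneg (mul_nonneg hU hU) (neg_nonneg.2 hz), mul_nonneg hU (neg_nonneg.2 hz),
        sq_nonneg (U - (z-1)^2), mul_nonneg (mul_nonneg hU (neg_nonneg.2 hz)) h']
  nlinarith [hQ]

private lemma keyRpos (U z : ℝ) (hU : 0 ≤ U) (h' : 0 ≤ 3 - 3*U - 2*z^2) :
    0 ≤ (z-1)^2*(z+2) + 3*U*z := by
  rcases le_total 0 z with hz | hz
  · have h1 : 0 ≤ 2 + z := by linarith
    nlinarith [sq_nonneg (z-1), mul_nonneg hU hz]
  · have hz2 : 0 ≤ 2 + z := by nlinarith [sq_nonneg z]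
    nlinarith [mul_nonneg hU (neg_nonneg.2 hz), sq_nonneg (z-1), sq_nonneg (z+1),
      mul_nonneg (mul_nonneg hU (neg_nonneg.2 hz)) (neg_nonneg.2 hz)]

private lemma keyIneq (b S U t w : ℝ) (hb2 : b^2 ≤ 10/144) (hS : 0 ≤ S) (hU : 0 ≤ U)
    (ht : t^2 ≤ U) (hc : S + U + w^2 = 1) :
    b*t*(w^2 - 2*S) + (1/Real.sqrt 2)*S*w + (1/(2*Real.sqrt 2))*w^3 ≤ 2/(3*Real.sqrt 3) := by
  have hs2 : Real.sqrt 2 ^ 2 = 2 := Real.sq_sqrt (by norm_num)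
  have hs3 : Real.sqrt 3 ^ 2 = 3 := Real.sq_sqrt (by norm_num)
  have h2p : (0:ℝ) < Real.sqrt 2 := Real.sqrt_pos.2 (by norm_num)
  have h3p : (0:ℝ) < Real.sqrt 3 := Real.sqrt_pos.2 (by norm_num)
  obtain ⟨z, hzdef⟩ : ∃ z : ℝ, z = Real.sqrt 3 * w / Real.sqrt 2 := ⟨_, rfl⟩
  have hz2 : 2 * z^2 = 3 * w^2 := by
    rw [hzdef, div_pow, mul_pow, hs3, hs2]; ring
  have h' : 0 ≤ 3 - 3*U - 2*z^2 := by nlinarith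
  have h3S : 3*S = 3 - 3*U - 2*z^2 := by nlinarith
  have hR : (z-1)^2*(z+2) + 3*U*z = 2 - 3*S*z - z^3 := by linear_combination z * h3S
  have hD : w^2 - 2*S = 2*(z^2 - 1 + U) := by linarith
  have hkey := keyPoly U z hU h'
  have hRnn := keyRpos U z hU h'
  have hbt : b^2 * t^2 ≤ (10/144) * U :=
    mul_le_mul hb2 ht (sq_nonneg t) (by norm_num)
  have hsq : (3*Real.sqrt 3*(b*t*(w^2 - 2*S)))^2 ≤ ((z-1)^2*(z+2) + 3*U*z)^2 := by
    rw [hD]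
    have e1 : (3*Real.sqrt 3*(b*t*(2*(z^2-1+U))))^2
        = Real.sqrt 3^2 * (36 * (b^2*t^2) * (z^2-1+U)^2) := by ring
    rw [e1, hs3]
    nlinarith [hkey, mul_le_mul_of_nonneg_right hbt (sq_nonneg (z^2-1+U))]
  have hle : 3*Real.sqrt 3*(b*t*(w^2 - 2*S)) ≤ 2 - 3*S*z - z^3 := by
    rw [← hR]; nlinarith [hsq, hRnn]
  have e3 : Real.sqrt 3^3 = 3*Real.sqrt 3 := by
    rw [pow_succ, hs3]
  have e2 : Real.sqrt 2^3 = 2*Real.sqrt 2 := by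
    rw [pow_succ, hs2]
  have hA : 3*Real.sqrt 3*((1/Real.sqrt 2)*S*w + (1/(2*Real.sqrt 2))*w^3) = 3*S*z + z^3 := by
    rw [hzdef, div_pow, mul_pow, e3, e2]
    field_simp
  rw [le_div_iff₀ (by positivity)]
  nlinarith [hle, hA]

/-- Let `m, k ≥ 1`, let `γ ∈ ℝ^k` be a unit vector, and let
`|b| < √10/12`. Then for all `(s, u, w)` with `‖s‖² + ‖u‖² + w² = 1`,
`−2b‖s‖²⟨γ, u⟩ + (1/√2)‖s‖²w + b⟨γ, u⟩w² + (1/(2√2))w³ ≤ 2/(3√3)`;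
equality is attained at every point `(s, 0, √2/√3)` with `‖s‖² = 1/3`, so the
maximum over the unit sphere equals `2/(3√3)`. -/
theorem stmt_16 (m k : ℕ) (hm : 1 ≤ m) (hk : 1 ≤ k)
    (γ : Fin k → ℝ) (hγ : ∑ j, (γ j) ^ 2 = 1)
    (b : ℝ) (hb : |b| < Real.sqrt 10 / 12) :
    let P3 : (Fin m → ℝ) → (Fin k → ℝ) → ℝ → ℝ := fun s u w =>
      -2 * b * (∑ i, (s i) ^ 2) * (∑ j, γ j * u j)
        + (1 / Real.sqrt 2) * (∑ i, (s i) ^ 2) * w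
        + b * (∑ j, γ j * u j) * w ^ 2
        + (1 / (2 * Real.sqrt 2)) * w ^ 3
    (∀ (s : Fin m → ℝ) (u : Fin k → ℝ) (w : ℝ),
        (∑ i, (s i) ^ 2) + (∑ j, (u j) ^ 2) + w ^ 2 = 1 →
        P3 s u w ≤ 2 / (3 * Real.sqrt 3)) ∧
    (∀ s : Fin m → ℝ, (∑ i, (s i) ^ 2) = 1 / 3 →
        P3 s 0 (Real.sqrt 2 / Real.sqrt 3) = 2 / (3 * Real.sqrt 3)) ∧
    IsGreatest
      {y : ℝ | ∃ (s : Fin m → ℝ) (u : Fin k → ℝ) (w : ℝ),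
        (∑ i, (s i) ^ 2) + (∑ j, (u j) ^ 2) + w ^ 2 = 1 ∧ y = P3 s u w}
      (2 / (3 * Real.sqrt 3)) := by
  intro P3
  have hs2 : Real.sqrt 2 ^ 2 = 2 := Real.sq_sqrt (by norm_num)
  have hs3 : Real.sqrt 3 ^ 2 = 3 := Real.sq_sqrt (by norm_num)
  have h2p : (0:ℝ) < Real.sqrt 2 := Real.sqrt_pos.2 (by norm_num)
  have h3p : (0:ℝ) < Real.sqrt 3 := Real.sqrt_pos.2 (by norm_num)
  have hb2 : b^2 ≤ 10/144 := by
    have h10 : Real.sqrt 10 ^ 2 = 10 := Real.sq_sqrt (by norm_num)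
    have habs : |b|^2 < (Real.sqrt 10 / 12)^2 :=
      pow_lt_pow_left₀ hb (abs_nonneg b) (by norm_num)
    rw [sq_abs, div_pow, h10] at habs
    nlinarith [habs]
  have hUB : ∀ (s : Fin m → ℝ) (u : Fin k → ℝ) (w : ℝ),
      (∑ i, (s i) ^ 2) + (∑ j, (u j) ^ 2) + w ^ 2 = 1 →
      P3 s u w ≤ 2 / (3 * Real.sqrt 3) := by
    intro s u w hc
    have hS : 0 ≤ ∑ i, (s i)^2 := Finset.sum_nonneg fun i _ => sq_nonneg _
    have hU : 0 ≤ ∑ j, (u j)^2 := Finset.sum_nonneg fun j _ => sq_nonneg _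
    have ht : (∑ j, γ j * u j)^2 ≤ ∑ j, (u j)^2 := by
      have := Finset.sum_mul_sq_le_sq_mul_sq Finset.univ γ u
      rw [hγ, one_mul] at this
      exact this
    have := keyIneq b (∑ i, (s i)^2) (∑ j, (u j)^2) (∑ j, γ j * u j) w hb2 hS hU ht hc
    calc P3 s u w
        = b*(∑ j, γ j * u j)*(w^2 - 2*(∑ i, (s i)^2))
          + (1/Real.sqrt 2)*(∑ i, (s i)^2)*w + (1/(2*Real.sqrt 2))*w^3 := by
          show -2 * b * (∑ i, (s i) ^ 2) * (∑ j, γ j * u j)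
            + (1 / Real.sqrt 2) * (∑ i, (s i) ^ 2) * w
            + b * (∑ j, γ j * u j) * w ^ 2
            + (1 / (2 * Real.sqrt 2)) * w ^ 3 = _
          ring
      _ ≤ 2 / (3 * Real.sqrt 3) := this
  have hEQ : ∀ s : Fin m → ℝ, (∑ i, (s i) ^ 2) = 1 / 3 →
      P3 s 0 (Real.sqrt 2 / Real.sqrt 3) = 2 / (3 * Real.sqrt 3) := by
    intro s hs
    have h0 : (∑ j, γ j * (0 : Fin k → ℝ) j) = 0 := by simp
    show -2 * b * (∑ i, (s i) ^ 2) * (∑ j, γ j * (0 : Fin k → ℝ) j)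
        + (1 / Real.sqrt 2) * (∑ i, (s i) ^ 2) * (Real.sqrt 2 / Real.sqrt 3)
        + b * (∑ j, γ j * (0 : Fin k → ℝ) j) * (Real.sqrt 2 / Real.sqrt 3) ^ 2
        + (1 / (2 * Real.sqrt 2)) * (Real.sqrt 2 / Real.sqrt 3) ^ 3
        = 2 / (3 * Real.sqrt 3)
    rw [h0, hs]
    have e3 : Real.sqrt 3^3 = 3*Real.sqrt 3 := by rw [pow_succ, hs3]
    have e2 : Real.sqrt 2^3 = 2*Real.sqrt 2 := by rw [pow_succ, hs2]
    rw [div_pow, div_pow, e3, e2]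
    field_simp
    ring_nf
  refine ⟨hUB, hEQ, ?_, ?_⟩
  · -- membership
    have hm0 : 0 < m := hm
    set i0 : Fin m := ⟨0, hm0⟩
    set s0 : Fin m → ℝ := fun i => if i = i0 then Real.sqrt (1/3) else 0 with hs0def
    have hsum : (∑ i, (s0 i)^2) = 1/3 := by
      have h1 : ∀ i, (s0 i)^2 = if i = i0 then (1/3 : ℝ) else 0 := by
        intro i
        by_cases h : i = i0
        · simp only [hs0def, h, if_pos rfl]
          exact Real.sq_sqrt (by norm_num)
        · simp [hs0def, h]
      rw [Finset.sum_congr rfl fun i _ => h1 i, Finset.sum_ite_eq']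
      simp
    refine ⟨s0, 0, Real.sqrt 2 / Real.sqrt 3, ?_, (hEQ s0 hsum).symm⟩
    have hw2 : (Real.sqrt 2 / Real.sqrt 3)^2 = 2/3 := by
      rw [div_pow, hs2, hs3]
    rw [hsum, hw2]
    simp
    norm_num
  · rintro y ⟨s, u, w, hc, rfl⟩
    exact hUB s u w hc
end

section
/- For every c ∈ [0, 1] and all s, u, w ∈ ℝ with s² + u² + w² = 1, one has −(1/√3)·c·s²·u − (2/(3√3))·c³·u³ + s²·w + (2/√3)·c·u·w² ≤ 2/(3√3); moreover equality is attained at (s, u, w) = (√2/√3, 0, 1/√3), so the maximum of the left-hand side over the unit sphere in ℝ³ equals 2/(3√3). -/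
private lemma key_syz (s y z : ℝ) (hd : 3*s^2 + y^2 + z^2 - y*z ≤ 3) :
    y*(3*s^2 + z^2 - y*z) ≤ 2 := by
  rcases le_or_gt 0 y with hy | hy
  · nlinarith [mul_nonneg hy (sq_nonneg s), sq_nonneg (y-1), mul_nonneg (mul_nonneg hy hy) hy,
      mul_nonneg hy (sq_nonneg (y-z))]
  · rcases le_or_gt 0 (3*s^2 + z^2 - y*z) with hq | hq
    · nlinarith [mul_nonneg (le_of_lt (neg_pos.2 hy)) hq]
    · have hz : z < 0 := by nlinarith [sq_nonneg s, sq_nonneg z]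
      nlinarith [mul_nonneg (le_of_lt (neg_pos.2 hy)) (sq_nonneg s), sq_nonneg (y+2), sq_nonneg (z+1),
        sq_nonneg (y - 2*z), sq_nonneg (y - z - 1), sq_nonneg (y*z - 2),
        mul_nonneg (le_of_lt (neg_pos.2 hy)) (le_of_lt (neg_pos.2 hz)),
        mul_nonneg (mul_nonneg (le_of_lt (neg_pos.2 hy)) (le_of_lt (neg_pos.2 hz))) (le_of_lt (neg_pos.2 hz))]

private lemma key_main (c : ℝ) (hc0 : 0 ≤ c) (hc1 : c ≤ 1) (s u w : ℝ)
    (h : s ^ 2 + u ^ 2 + w ^ 2 = 1) :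
    -(1 / Real.sqrt 3) * c * s ^ 2 * u - (2 / (3 * Real.sqrt 3)) * c ^ 3 * u ^ 3
      + s ^ 2 * w + (2 / Real.sqrt 3) * c * u * w ^ 2 ≤ 2 / (3 * Real.sqrt 3) := by
  set r := Real.sqrt 3 with hrdef
  have hr : r^2 = 3 := Real.sq_sqrt (by norm_num)
  have hr0 : 0 < r := Real.sqrt_pos.2 (by norm_num)
  have hrne : r ≠ 0 := ne_of_gt hr0
  have hd : 3*s^2 + (r*w - c*u)^2 + (r*w + c*u)^2 - (r*w - c*u)*(r*w + c*u) ≤ 3 := by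
    have hr2 : r^2*w^2 = 3*w^2 := by rw [hr]
    nlinarith [mul_nonneg (mul_nonneg (by linarith : (0:ℝ) ≤ 1 - c) (by linarith : (0:ℝ) ≤ 1 + c)) (sq_nonneg u)]
  have key := key_syz s (r*w - c*u) (r*w + c*u) hd
  have hEq : -(1 / r) * c * s ^ 2 * u - (2 / (3 * r)) * c ^ 3 * u ^ 3
      + s ^ 2 * w + (2 / r) * c * u * w ^ 2
      = (r/9) * ((r*w - c*u)*(3*s^2 + (r*w + c*u)^2 - (r*w - c*u)*(r*w + c*u))) := by
    field_simp
    ring_nf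
    linear_combination (-(-9*c*u*s^2 + 6*(r^2 + 3)*c*u*w^2 - 6*c^3*u^3 + 9*r*s^2*w)) * hr
  rw [hEq]
  have h29 : 2 / (3*r) = (r/9) * 2 := by
    field_simp
    linear_combination (-3) * hr
  rw [h29]
  exact mul_le_mul_of_nonneg_left key (by positivity)

/-- For every `c ∈ [0, 1]` and all `(s, u, w)` on the unit sphere
in `ℝ³`, one has `−(1/√3)c·s²u − (2/(3√3))c³u³ + s²w + (2/√3)c·uw² ≤ 2/(3√3)`;
equality is attained at `(s, u, w) = (√2/√3, 0, 1/√3)`, so the maximum over the unit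
sphere equals `2/(3√3)`. -/
theorem stmt_17 (c : ℝ) (hc : c ∈ Set.Icc (0 : ℝ) 1) :
    (∀ s u w : ℝ, s ^ 2 + u ^ 2 + w ^ 2 = 1 →
      -(1 / Real.sqrt 3) * c * s ^ 2 * u - (2 / (3 * Real.sqrt 3)) * c ^ 3 * u ^ 3
        + s ^ 2 * w + (2 / Real.sqrt 3) * c * u * w ^ 2 ≤ 2 / (3 * Real.sqrt 3)) ∧
    -(1 / Real.sqrt 3) * c * (Real.sqrt 2 / Real.sqrt 3) ^ 2 * (0 : ℝ)
        - (2 / (3 * Real.sqrt 3)) * c ^ 3 * (0 : ℝ) ^ 3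
        + (Real.sqrt 2 / Real.sqrt 3) ^ 2 * (1 / Real.sqrt 3)
        + (2 / Real.sqrt 3) * c * (0 : ℝ) * (1 / Real.sqrt 3) ^ 2 = 2 / (3 * Real.sqrt 3) ∧
    IsGreatest
      {y : ℝ | ∃ s u w : ℝ, s ^ 2 + u ^ 2 + w ^ 2 = 1 ∧
        y = -(1 / Real.sqrt 3) * c * s ^ 2 * u - (2 / (3 * Real.sqrt 3)) * c ^ 3 * u ^ 3
          + s ^ 2 * w + (2 / Real.sqrt 3) * c * u * w ^ 2}
      (2 / (3 * Real.sqrt 3)) := by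
  obtain ⟨hc0, hc1⟩ := hc
  have h3ne : Real.sqrt 3 ≠ 0 := by positivity
  have hs2 : (Real.sqrt 2) ^ 2 = 2 := Real.sq_sqrt (by norm_num)
  have hs3 : (Real.sqrt 3) ^ 2 = 3 := Real.sq_sqrt (by norm_num)
  have hpt : (Real.sqrt 2 / Real.sqrt 3) ^ 2 + (0:ℝ) ^ 2 + (1 / Real.sqrt 3) ^ 2 = 1 := by
    rw [div_pow, div_pow, hs2, hs3]
    norm_num
  have heq : -(1 / Real.sqrt 3) * c * (Real.sqrt 2 / Real.sqrt 3) ^ 2 * (0 : ℝ)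
        - (2 / (3 * Real.sqrt 3)) * c ^ 3 * (0 : ℝ) ^ 3
        + (Real.sqrt 2 / Real.sqrt 3) ^ 2 * (1 / Real.sqrt 3)
        + (2 / Real.sqrt 3) * c * (0 : ℝ) * (1 / Real.sqrt 3) ^ 2 = 2 / (3 * Real.sqrt 3) := by
    rw [div_pow, hs2, hs3]
    field_simp
    ring
  refine ⟨fun s u w h => key_main c hc0 hc1 s u w h, heq, ⟨⟨_, _, _, hpt, heq.symm⟩, ?_⟩⟩
  rintro y ⟨s, u, w, h, rfl⟩
  exact key_main c hc0 hc1 s u w h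
end

section
/- Let R ∈ (√3/2, √3) and b > 0, and set a = (R² − 1)/R³, q = (−3·b²·R⁴ + (3 − R²)²)/(R·(3 − R²)²), and c = b·R²·(b²·R⁴ − (3 − R²)²)/(3 − R²)³. Then there exist v, w ∈ ℝ with v² + w² = 1 and c·v³ + q·v²·w + b·v·w² + a·w³ = 2/(3√3). -/
/-- Let `R ∈ (√3/2, √3)`, `b > 0`, and set `a = (R² − 1)/R³`,
`q = (−3b²R⁴ + (3 − R²)²)/(R(3 − R²)²)`, `c = bR²(b²R⁴ − (3 − R²)²)/(3 − R²)³`.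
Then there exist `v, w` with `v² + w² = 1` and
`c·v³ + q·v²w + b·vw² + a·w³ = 2/(3√3)`. -/
theorem stmt_18 (R b : ℝ) (h1 : Real.sqrt 3 / 2 < R) (h2 : R < Real.sqrt 3) (hb : 0 < b) :
    let a : ℝ := (R ^ 2 - 1) / R ^ 3
    let q : ℝ := (-3 * b ^ 2 * R ^ 4 + (3 - R ^ 2) ^ 2) / (R * (3 - R ^ 2) ^ 2)
    let c : ℝ := b * R ^ 2 * (b ^ 2 * R ^ 4 - (3 - R ^ 2) ^ 2) / (3 - R ^ 2) ^ 3
    ∃ v w : ℝ, v ^ 2 + w ^ 2 = 1 ∧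
      c * v ^ 3 + q * v ^ 2 * w + b * v * w ^ 2 + a * w ^ 3 = 2 / (3 * Real.sqrt 3) := by
  intro a q c
  have hs3 : (Real.sqrt 3) ^ 2 = 3 := Real.sq_sqrt (by norm_num)
  have hs3pos : 0 < Real.sqrt 3 := Real.sqrt_pos.mpr (by norm_num)
  have hR : 0 < R := lt_trans (by positivity) h1
  have hR2 : R ^ 2 < 3 := by
    have := sq_lt_sq' (by linarith : -Real.sqrt 3 < R) h2
    simpa [hs3] using this
  have hS : 0 < 3 - R ^ 2 := by linarith
  have hE : 0 < (3 - R ^ 2) ^ 3 + 3 * b ^ 2 * R ^ 6 := by positivity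
  set m : ℝ := Real.sqrt ((3 - R ^ 2) ^ 3 + 3 * b ^ 2 * R ^ 6) with hmdef
  have hm : m ^ 2 = (3 - R ^ 2) ^ 3 + 3 * b ^ 2 * R ^ 6 := Real.sq_sqrt hE.le
  have hmpos : 0 < m := Real.sqrt_pos.mpr hE
  have hKpos : 0 < m + b * R ^ 4 := by positivity
  have hK : m + b * R ^ 4 ≠ 0 := ne_of_gt hKpos
  have hDpos : 0 < Real.sqrt 3 * (m + b * R ^ 4) := by positivity
  have hD : Real.sqrt 3 * (m + b * R ^ 4) ≠ 0 := ne_of_gt hDpos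
  refine ⟨(3 - R ^ 2) ^ 2 / (Real.sqrt 3 * (m + b * R ^ 4)),
    R * (m + 3 * b * R ^ 2) / (Real.sqrt 3 * (m + b * R ^ 4)), ?_, ?_⟩
  · field_simp
    linear_combination (R ^ 2 - 3) * hm + (-(m + b * R ^ 4) ^ 2) * hs3
  · have hnum : c * ((3 - R ^ 2) ^ 2) ^ 3
        + q * ((3 - R ^ 2) ^ 2) ^ 2 * (R * (m + 3 * b * R ^ 2))
        + b * ((3 - R ^ 2) ^ 2) * (R * (m + 3 * b * R ^ 2)) ^ 2
        + a * (R * (m + 3 * b * R ^ 2)) ^ 3 = 2 * (m + b * R ^ 4) ^ 3 := by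
      simp only [a, q, c]
      field_simp
      linear_combination ((R ^ 2 - 3) * m + (3 - R ^ 2) ^ 2 * b * R ^ 2
        + 9 * b * R ^ 2 * (R ^ 2 - 1) - 6 * b * R ^ 4) * hm
    have step1 : c * ((3 - R ^ 2) ^ 2 / (Real.sqrt 3 * (m + b * R ^ 4))) ^ 3
        + q * ((3 - R ^ 2) ^ 2 / (Real.sqrt 3 * (m + b * R ^ 4))) ^ 2
            * (R * (m + 3 * b * R ^ 2) / (Real.sqrt 3 * (m + b * R ^ 4)))
        + b * ((3 - R ^ 2) ^ 2 / (Real.sqrt 3 * (m + b * R ^ 4)))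
            * (R * (m + 3 * b * R ^ 2) / (Real.sqrt 3 * (m + b * R ^ 4))) ^ 2
        + a * (R * (m + 3 * b * R ^ 2) / (Real.sqrt 3 * (m + b * R ^ 4))) ^ 3
        = (c * ((3 - R ^ 2) ^ 2) ^ 3
        + q * ((3 - R ^ 2) ^ 2) ^ 2 * (R * (m + 3 * b * R ^ 2))
        + b * ((3 - R ^ 2) ^ 2) * (R * (m + 3 * b * R ^ 2)) ^ 2
        + a * (R * (m + 3 * b * R ^ 2)) ^ 3) / (Real.sqrt 3 * (m + b * R ^ 4)) ^ 3 := by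
      field_simp
    rw [step1, hnum]
    rw [div_eq_div_iff (by positivity) (by positivity)]
    linear_combination (-2 * Real.sqrt 3 * (m + b * R ^ 4) ^ 3) * hs3
end

section
/- For every R ∈ [√3/2, √3] and all s, w ∈ ℝ with s² + w² = 1, one has (1/R)·s²·w + ((R² − 1)/R³)·w³ ≤ 2/(3√3); moreover equality is attained at (s, w) = (√((3 − R²)/3), R/√3), so the maximum of the left-hand side over the unit circle equals 2/(3√3). -/
/-- For every `R ∈ [√3/2, √3]` and all `(s, w)` on the unit circle,
one has `(1/R)s²w + ((R² − 1)/R³)w³ ≤ 2/(3√3)`; equality is attained at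
`(s, w) = (√((3 − R²)/3), R/√3)`, so the maximum over the unit circle equals
`2/(3√3)`. -/
theorem stmt_19 (R : ℝ) (hR : R ∈ Set.Icc (Real.sqrt 3 / 2) (Real.sqrt 3)) :
    (∀ s w : ℝ, s ^ 2 + w ^ 2 = 1 →
      (1 / R) * s ^ 2 * w + ((R ^ 2 - 1) / R ^ 3) * w ^ 3 ≤ 2 / (3 * Real.sqrt 3)) ∧
    (1 / R) * (Real.sqrt ((3 - R ^ 2) / 3)) ^ 2 * (R / Real.sqrt 3)
        + ((R ^ 2 - 1) / R ^ 3) * (R / Real.sqrt 3) ^ 3 = 2 / (3 * Real.sqrt 3) ∧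
    IsGreatest
      {y : ℝ | ∃ s w : ℝ, s ^ 2 + w ^ 2 = 1 ∧
        y = (1 / R) * s ^ 2 * w + ((R ^ 2 - 1) / R ^ 3) * w ^ 3}
      (2 / (3 * Real.sqrt 3)) := by
  obtain ⟨hR1, hR2⟩ := hR
  set c := Real.sqrt 3 with hcdef
  have hc : c ^ 2 = 3 := Real.sq_sqrt (by norm_num)
  have hc0 : 0 < c := Real.sqrt_pos.mpr (by norm_num)
  have hR0 : 0 < R := lt_of_lt_of_le (by positivity) hR1
  have hub : ∀ s w : ℝ, s ^ 2 + w ^ 2 = 1 →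
      (1 / R) * s ^ 2 * w + ((R ^ 2 - 1) / R ^ 3) * w ^ 3 ≤ 2 / (3 * c) := by
    intro s w h
    have hs : s ^ 2 = 1 - w ^ 2 := by linarith
    have hw1 : -1 ≤ w := by nlinarith [sq_nonneg s, sq_nonneg (w + 1)]
    have h1 : 0 ≤ w * c + 2 * R := by nlinarith
    have hid : 2 * R ^ 3 - 3 * c * (R ^ 2 * w - w ^ 3)
        = (w * c - R) ^ 2 * (w * c + 2 * R) + w ^ 3 * c * (3 - c ^ 2) := by ring
    have key : 3 * c * (R ^ 2 * w - w ^ 3) ≤ 2 * R ^ 3 := by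
      have hnn := mul_nonneg (sq_nonneg (w * c - R)) h1
      rw [hc] at hid
      linarith [hid, hnn]
    have heq : (1 / R) * s ^ 2 * w + ((R ^ 2 - 1) / R ^ 3) * w ^ 3
        = (R ^ 2 * w - w ^ 3) / R ^ 3 := by
      rw [hs]; field_simp; ring
    rw [heq, div_le_div_iff₀ (by positivity) (by positivity)]
    nlinarith [key, pow_pos hR0 3]
  have hR3 : R ^ 2 ≤ 3 := by nlinarith
  have hsq : (Real.sqrt ((3 - R ^ 2) / 3)) ^ 2 = (3 - R ^ 2) / 3 :=
    Real.sq_sqrt (by linarith [div_nonneg (by linarith : (0:ℝ) ≤ 3 - R ^ 2) (by norm_num : (0:ℝ) ≤ 3)])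
  have hmem : (Real.sqrt ((3 - R ^ 2) / 3)) ^ 2 + (R / c) ^ 2 = 1 := by
    rw [hsq, div_pow, hc]; field_simp; ring
  have heq2 : (1 / R) * (Real.sqrt ((3 - R ^ 2) / 3)) ^ 2 * (R / c)
      + ((R ^ 2 - 1) / R ^ 3) * (R / c) ^ 3 = 2 / (3 * c) := by
    rw [hsq]
    have hR0' := hR0.ne'
    have hc0' := hc0.ne'
    field_simp
    linear_combination (1 - R ^ 2) * hc
  refine ⟨hub, heq2, ⟨⟨_, _, hmem, heq2.symm⟩, ?_⟩⟩
  rintro y ⟨s, w, h, rfl⟩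
  exact hub s w h
end
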